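/- Let G=(V,E) be a d-manifold with d≥1, let f:V→ℝ be any function and let c∈ℝ with c∉f(V). Then the level set {f=c} is either the empty graph or a (d−1)-manifold. -/
import Mathlib


open scoped Classical

/-- A finite simple graph: a finite vertex set together with a symmetric, irreflexive
adjacency relation supported on the vertex set. -/
structure FGraph (V : Type) where
  verts : Finset V
  Adj : V → V → Prop
  symm : ∀ {a b}, Adj a b → Adj b a
  loopless : ∀ a, ¬ Adj a a
  mem_of_adj : ∀ {a b}, Adj a b → a ∈ verts

namespace FGraph

variable {V W : Type}

/-- The subgraph induced on the vertices satisfying `P`. -/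
noncomputable def induce (G : FGraph V) (P : V → Prop) : FGraph V where
  verts := G.verts.filter P
  Adj a b := G.Adj a b ∧ P a ∧ P b
  symm h := ⟨G.symm h.1, h.2.2, h.2.1⟩
  loopless a h := G.loopless a h.1
  mem_of_adj h := Finset.mem_filter.mpr ⟨G.mem_of_adj h.1, h.2.1⟩

/-- The unit sphere of a vertex: the subgraph induced on its neighbors. -/
noncomputable def unitSphere (G : FGraph V) (v : V) : FGraph V :=
  G.induce (fun w => G.Adj v w)

/-- The graph with the vertex `v` (and its edges) removed. -/
noncomputable def erase (G : FGraph V) (v : V) : FGraph V :=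
  G.induce (fun w => w ≠ v)

/-- Inductive definition of contractibility: the one-point graph is contractible, and a
graph is contractible if some vertex has a contractible unit sphere and contractible
complement. -/
inductive Contractible : FGraph V → Prop
  | single (G : FGraph V) (v : V) (h : G.verts = {v}) : Contractible G
  | step (G : FGraph V) (v : V) (hv : v ∈ G.verts)
      (h1 : Contractible (G.unitSphere v)) (h2 : Contractible (G.erase v)) :
      Contractible G

mutual
  /-- `G` is a `d`-sphere: the empty graph is the `(-1)`-sphere, and a `d`-manifold is a
  `d`-sphere if removing some vertex renders it contractible. -/
  inductive IsSphere : ℤ → FGraph V → Prop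
    | empty (G : FGraph V) (h : G.verts = ∅) : IsSphere (-1) G
    | punctured (d : ℤ) (G : FGraph V) (hm : IsManifold d G) (v : V) (hv : v ∈ G.verts)
        (hc : Contractible (G.erase v)) : IsSphere d G
  /-- For `d ≥ 0`, `G` is a `d`-manifold iff every unit sphere is a `(d-1)`-sphere. -/
  inductive IsManifold : ℤ → FGraph V → Prop
    | intro (d : ℤ) (hd : 0 ≤ d) (G : FGraph V)
        (h : ∀ v ∈ G.verts, IsSphere (d - 1) (G.unitSphere v)) : IsManifold d G
end

/-- A simplex of `G`: the vertex set of a complete subgraph. -/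
def IsSimplex (G : FGraph V) (x : Finset V) : Prop :=
  x.Nonempty ∧ ↑x ⊆ G.verts ∧ ∀ a ∈ x, ∀ b ∈ x, a ≠ b → G.Adj a b

/-- The Barycentric refinement: vertices are the simplices of `G`, two being adjacent iff
one is strictly contained in the other. -/
noncomputable def barycentric (G : FGraph V) : FGraph (Finset V) where
  verts := G.verts.powerset.filter (fun x => G.IsSimplex x)
  Adj x y := G.IsSimplex x ∧ G.IsSimplex y ∧ (x ⊂ y ∨ y ⊂ x)
  symm h := ⟨h.2.1, h.1, h.2.2.symm⟩
  loopless x h := by rcases h.2.2 with h' | h' <;> exact (ssubset_irrefl x h')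
  mem_of_adj h := Finset.mem_filter.mpr ⟨Finset.mem_powerset.mpr h.1.2.1, h.1⟩

/-- Number of simplices of `G` with exactly `j` vertices (so `numSimplices G (k+1)` is
the `f`-vector entry `f_k(G)`). -/
noncomputable def numSimplices (G : FGraph V) (j : ℕ) : ℕ :=
  (G.verts.powerset.filter (fun x => G.IsSimplex x ∧ x.card = j)).card

/-- Euler characteristic `χ(G) = Σ_{k ≥ 0} (-1)^k f_k(G)`, where `f_k` counts the
simplices with `k+1` vertices. -/
noncomputable def euler (G : FGraph V) : ℤ :=
  ∑ k ∈ Finset.range G.verts.card, (-1 : ℤ) ^ k * G.numSimplices (k + 1)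

/-- The level set `{f = c}`: the subgraph of the Barycentric refinement induced by the
simplices on which `f - c` changes sign. -/
noncomputable def levelSet (G : FGraph V) (f : V → ℝ) (c : ℝ) : FGraph (Finset V) :=
  G.barycentric.induce (fun x => (∃ a ∈ x, f a - c < 0) ∧ (∃ b ∈ x, 0 < f b - c))

/-- Graph isomorphism. -/
def Iso (G : FGraph V) (H : FGraph W) : Prop :=
  ∃ φ : V → W, Set.BijOn φ ↑G.verts ↑H.verts ∧
    ∀ a ∈ G.verts, ∀ b ∈ G.verts, (G.Adj a b ↔ H.Adj (φ a) (φ b))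

/-- Zykov join of two graphs: disjoint union plus all edges between the two parts. -/
noncomputable def join (G : FGraph V) (H : FGraph W) : FGraph (V ⊕ W) where
  verts := G.verts.disjSum H.verts
  Adj a b :=
    match a, b with
    | .inl a, .inl b => G.Adj a b
    | .inr a, .inr b => H.Adj a b
    | .inl a, .inr b => a ∈ G.verts ∧ b ∈ H.verts
    | .inr a, .inl b => b ∈ G.verts ∧ a ∈ H.verts
  symm {a b} h := by
    cases a <;> cases b <;> simp_all <;> first | exact G.symm h | exact H.symm h
  loopless a h := by
    cases a <;> simp_all <;> first | exact G.loopless _ h | exact H.loopless _ h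
  mem_of_adj {a b} h := by
    cases a <;> cases b <;> simp_all [Finset.mem_disjSum] <;>
      first | exact G.mem_of_adj h | exact H.mem_of_adj h

/-- Union of two graphs on the same vertex type. -/
noncomputable def union (G H : FGraph V) : FGraph V where
  verts := G.verts ∪ H.verts
  Adj a b := G.Adj a b ∨ H.Adj a b
  symm h := h.imp G.symm H.symm
  loopless a h := h.elim (G.loopless a) (H.loopless a)
  mem_of_adj h :=
    h.elim (fun h' => Finset.mem_union_left _ (G.mem_of_adj h'))
      (fun h' => Finset.mem_union_right _ (H.mem_of_adj h'))

/-- A `d`-ball: a graph of the form `S - v` for a `d`-sphere `S` and a vertex `v` of `S`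
(up to graph isomorphism). -/
def IsBall (d : ℤ) (H : FGraph W) : Prop :=
  ∃ (S : FGraph ℕ) (v : ℕ), IsSphere d S ∧ v ∈ S.verts ∧ Iso H (S.erase v)

/-- A `d`-manifold with boundary: every unit sphere is a `(d-1)`-sphere or a `(d-1)`-ball. -/
def IsManifoldWithBoundary (d : ℤ) (G : FGraph V) : Prop :=
  ∀ v ∈ G.verts, IsSphere (d - 1) (G.unitSphere v) ∨ IsBall (d - 1) (G.unitSphere v)

/-- The cyclic graph `C_n` on the vertex set `Fin n`. -/
def cycleGraph (n : ℕ) : FGraph (Fin n) where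
  verts := Finset.univ
  Adj a b := a ≠ b ∧ ((a.val + 1) % n = b.val ∨ (b.val + 1) % n = a.val)
  symm h := ⟨h.1.symm, h.2.symm⟩
  loopless a h := h.1 rfl
  mem_of_adj _ := Finset.mem_univ _

/-- `G` is a disjoint union of cyclic graphs `C_n` with `n ≥ 4`: the vertex set splits
into pairwise disjoint pieces, edges never cross between pieces, and each piece induces
a graph isomorphic to a `C_n` with `n ≥ 4`. -/
def IsDisjointUnionOfCycles (G : FGraph V) : Prop :=
  ∃ P : Finset (Finset V),
    (∀ S ∈ P, ↑S ⊆ G.verts) ∧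
    (∀ S ∈ P, ∀ T ∈ P, S ≠ T → Disjoint S T) ∧
    (∀ v ∈ G.verts, ∃ S ∈ P, v ∈ S) ∧
    (∀ a b, G.Adj a b → ∀ S ∈ P, a ∈ S → b ∈ S) ∧
    (∀ S ∈ P, ∃ n, 4 ≤ n ∧ Iso (G.induce (· ∈ S)) (cycleGraph n))

/-- Poincaré–Hopf index `i_f(v) = 1 - χ(S^-_f(v))`. -/
noncomputable def pindex (G : FGraph V) (f : V → ℝ) (v : V) : ℤ :=
  1 - ((G.unitSphere v).induce (fun w => f w < f v)).euler

/-- Curvature `K(v) = Σ_{k ≥ 0} (-1)^k f_{k-1}(S(v))/(k+1)` with `f_{-1} = 1`. -/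
noncomputable def curvature (G : FGraph V) (v : V) : ℝ :=
  ∑ k ∈ Finset.range (G.verts.card + 1),
    (-1 : ℝ) ^ k * (if k = 0 then 1 else ((G.unitSphere v).numSimplices k : ℝ)) / (k + 1)

end FGraph

/-- `sign(a + i b) = sign(a) + i sign(b)`. -/
noncomputable def csgn (z : ℂ) : ℂ :=
  ⟨Real.sign z.re, Real.sign z.im⟩

/-- The set `U = {1+i, 1-i, -1+i, -1-i}` of possible values of `csgn`. -/
noncomputable def signU : Finset ℂ :=
  {1 + Complex.I, 1 - Complex.I, -1 + Complex.I, -1 - Complex.I}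

namespace FGraph

variable {V : Type}

/-- The set of values of `sign(ψ - c)` attained on the finite vertex set `x`. -/
noncomputable def signValues (ψ : V → ℂ) (c : ℂ) (x : Finset V) : Finset ℂ :=
  x.image (fun v => csgn (ψ v - c))

/-- The level set `{ψ = c}` of a complex-valued function: the subgraph of the Barycentric
refinement induced by the simplices on which `sign(ψ - c)` takes at least three distinct
values, including `-1+i` and `1-i`. -/
noncomputable def complexLevelSet (G : FGraph V) (ψ : V → ℂ) (c : ℂ) : FGraph (Finset V) :=
  G.barycentric.induce (fun x =>
    3 ≤ (signValues ψ c x).card ∧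
    (-1 + Complex.I) ∈ signValues ψ c x ∧ (1 - Complex.I) ∈ signValues ψ c x)

/-- The level set `{ψ = 0}_e` for a two-element subset `e ⊆ U`: the subgraph of the
Barycentric refinement induced by the simplices on which `sign(ψ)` attains both values
of `e` and at least three distinct values in total. -/
noncomputable def complexLevelSetE (G : FGraph V) (ψ : V → ℂ) (e : Finset ℂ) :
    FGraph (Finset V) :=
  G.barycentric.induce (fun x =>
    (∀ u ∈ e, u ∈ signValues ψ 0 x) ∧ 3 ≤ (signValues ψ 0 x).card)

/-- `Ψ^{-1}(t)`: the subgraph of the Barycentric refinement induced by the simplices on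
which `sign(ψ)` attains all values of `t`. -/
noncomputable def signPreimage (G : FGraph V) (ψ : V → ℂ) (t : Finset ℂ) :
    FGraph (Finset V) :=
  G.barycentric.induce (fun x => ∀ u ∈ t, u ∈ signValues ψ 0 x)

/-- The sign vectors of `F - c` attained on the finite vertex set `x`. -/
noncomputable def vecSignValues {k : ℕ} (F : V → Fin k → ℝ) (c : Fin k → ℝ)
    (x : Finset V) : Finset (Fin k → ℝ) :=
  x.image (fun v j => Real.sign (F v j - c j))

/-- The level set `{F = c}` of an `ℝ^k`-valued function: the subgraph of the Barycentric
refinement induced by the simplices on which the sign vector of `F - c` takes at least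
`k+1` distinct values, including the `k` vectors `(1,…,1,-1,1,…,1)`. -/
noncomputable def vecLevelSet (G : FGraph V) {k : ℕ} (F : V → Fin k → ℝ) (c : Fin k → ℝ) :
    FGraph (Finset V) :=
  G.barycentric.induce (fun x =>
    k + 1 ≤ (vecSignValues F c x).card ∧
    ∀ j : Fin k, (fun i => if i = j then (-1 : ℝ) else 1) ∈ vecSignValues F c x)

end FGraph

/-- The complete graph on `Fin n`. -/
def completeFGraph (n : ℕ) : FGraph (Fin n) where
  verts := Finset.univ
  Adj a b := a ≠ b
  symm h := h.symm
  loopless a h := h rfl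
  mem_of_adj _ := Finset.mem_univ _

/-- Stirling numbers of the second kind. -/
def stirling2 : ℕ → ℕ → ℕ
  | 0, 0 => 1
  | 0, _ + 1 => 0
  | _ + 1, 0 => 0
  | n + 1, m + 1 => (m + 1) * stirling2 n (m + 1) + stirling2 n m

namespace FGraph

variable {V : Type}

theorem ext' {G H : FGraph V} (hv : G.verts = H.verts)
    (ha : ∀ a b, G.Adj a b ↔ H.Adj a b) : G = H := by
  obtain ⟨v1, a1, s1, l1, m1⟩ := G
  obtain ⟨v2, a2, s2, l2, m2⟩ := H
  simp only at hv ha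
  subst hv
  have : a1 = a2 := by
    funext a b; exact propext (ha a b)
  subst this
  rfl

/-- The comparability graph on a family of finite sets. -/
noncomputable def Cmp (A : Finset (Finset V)) : FGraph (Finset V) where
  verts := A
  Adj x y := (x ⊂ y ∨ y ⊂ x) ∧ x ∈ A ∧ y ∈ A
  symm h := ⟨h.1.symm, h.2.2, h.2.1⟩
  loopless x h := by rcases h.1 with h' | h' <;> exact ssubset_irrefl x h'
  mem_of_adj h := h.2.1

@[simp] theorem cmp_verts (A : Finset (Finset V)) : (Cmp A).verts = A := rfl

@[simp] theorem cmp_adj (A : Finset (Finset V)) (x y : Finset V) :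
    (Cmp A).Adj x y ↔ (x ⊂ y ∨ y ⊂ x) ∧ x ∈ A ∧ y ∈ A := Iff.rfl

theorem cmp_unitSphere (A : Finset (Finset V)) {c : Finset V} (hc : c ∈ A) :
    (Cmp A).unitSphere c = Cmp (A.filter (fun y => c ⊂ y ∨ y ⊂ c)) := by
  apply ext'
  · ext y
    simp only [unitSphere, induce, Finset.mem_filter, cmp_verts, cmp_adj]
    tauto
  · intro a b
    simp only [unitSphere, induce, cmp_adj, Finset.mem_filter]
    tauto

theorem cmp_erase (A : Finset (Finset V)) (c : Finset V) :
    (Cmp A).erase c = Cmp (A.erase c) := by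
  apply ext'
  · ext y
    simp only [erase, induce, Finset.mem_filter, Finset.mem_erase, cmp_verts]
    tauto
  · intro a b
    simp only [erase, induce, cmp_adj, Finset.mem_erase]
    tauto

theorem contractible_of_dominating (G : FGraph V) (v : V) (hv : v ∈ G.verts)
    (hdom : ∀ w ∈ G.verts, w ≠ v → G.Adj v w) : Contractible G := by
  suffices H : ∀ n (G : FGraph V) (v : V), G.verts.card ≤ n → v ∈ G.verts →
      (∀ w ∈ G.verts, w ≠ v → G.Adj v w) → Contractible G from
    H G.verts.card G v le_rfl hv hdom
  intro n
  induction n with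
  | zero =>
    intro G v hn hv _
    rw [Nat.le_zero, Finset.card_eq_zero] at hn
    rw [hn] at hv
    exact absurd hv (Finset.notMem_empty v)
  | succ n IH =>
    intro G v hn hv hdom
    by_cases hu : ∃ u ∈ G.verts, u ≠ v
    · obtain ⟨u, hu, hune⟩ := hu
      have hlt : ∀ H : FGraph V, H.verts ⊆ G.verts → u ∉ H.verts → H.verts.card ≤ n := by
        intro H hsub hnm
        have : H.verts.card < G.verts.card :=
          Finset.card_lt_card ⟨hsub, fun h => hnm (h hu)⟩
        omega
      refine Contractible.step G u hu ?_ ?_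
      · have hvs : v ∈ (G.unitSphere u).verts := by
          simp only [unitSphere, induce, Finset.mem_filter]
          exact ⟨hv, G.symm (hdom u hu hune)⟩
        refine IH _ v ?_ hvs ?_
        · refine hlt _ ?_ ?_
          · intro w hw
            simp only [unitSphere, induce, Finset.mem_filter] at hw
            exact hw.1
          · simp only [unitSphere, induce, Finset.mem_filter]
            exact fun h => G.loopless u h.2
        · intro w hw hwne
          simp only [unitSphere, induce, Finset.mem_filter] at hw ⊢
          exact ⟨hdom w hw.1 hwne, G.symm (hdom u hu hune), hw.2⟩
      · have hvs : v ∈ (G.erase u).verts := by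
          simp only [erase, induce, Finset.mem_filter]
          exact ⟨hv, fun h => hune h.symm⟩
        refine IH _ v ?_ hvs ?_
        · refine hlt _ ?_ ?_
          · intro w hw
            simp only [erase, induce, Finset.mem_filter] at hw
            exact hw.1
          · simp only [erase, induce, Finset.mem_filter]
            exact fun h => h.2 rfl
        · intro w hw hwne
          simp only [erase, induce, Finset.mem_filter] at hw ⊢
          exact ⟨hdom w hw.1 hwne, fun h => hune h.symm, hw.2⟩
    · push_neg at hu
      refine Contractible.single G v ?_
      ext w
      simp only [Finset.mem_singleton]
      constructor
      · intro hw; exact hu w hw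
      · rintro rfl; exact hv

theorem cmp_dominated (A : Finset (Finset V)) (v : Finset V) (hv : v ∈ A)
    (h : ∀ w ∈ A, w ≠ v → (v ⊂ w ∨ w ⊂ v)) : Contractible (Cmp A) :=
  contractible_of_dominating _ v hv (fun w hw hne => ⟨h w hw hne, hv, hw⟩)

theorem ssub {s t : Finset V} (h1 : s ⊆ t) (h2 : s ≠ t) : s ⊂ t :=
  lt_of_le_of_ne h1 h2

/-- basic facts about spheres/manifolds -/
theorem manifold_nonneg {d : ℤ} {G : FGraph V} (h : IsManifold d G) : 0 ≤ d := by
  cases h with | intro d hd G h => exact hd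

theorem manifold_spheres {d : ℤ} {G : FGraph V} (h : IsManifold d G) :
    ∀ v ∈ G.verts, IsSphere (d - 1) (G.unitSphere v) := by
  cases h with | intro d hd G h => exact h

theorem sphere_nonneg_of_mem {d : ℤ} {G : FGraph V} (h : IsSphere d G)
    {v : Finset V → Finset V} : True := trivial

theorem sphere_dim_nonneg {d : ℤ} {G : FGraph V} (h : IsSphere d G) {v : V}
    (hv : v ∈ G.verts) : 0 ≤ d := by
  cases h with
  | empty G h => rw [h] at hv; exact absurd hv (Finset.notMem_empty v)
  | punctured d G hm w hw hc => exact manifold_nonneg hm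

theorem sphere_empty_dim {d : ℤ} {G : FGraph V} (h : IsSphere d G)
    (he : G.verts = ∅) : d = -1 := by
  cases h with
  | empty G h => rfl
  | punctured d G hm w hw hc => rw [he] at hw; exact absurd hw (Finset.notMem_empty w)

theorem manifold_of_sphere {d : ℤ} {G : FGraph V} (h : IsSphere d G) (hd : 0 ≤ d) :
    IsManifold d G := by
  cases h with
  | empty G h => omega
  | punctured d G hm w hw hc => exact hm

end FGraph
namespace FGraph

variable {V : Type}

theorem collapse (A pred : Finset (Finset V)) (hsub : pred ⊆ A) (μ : Finset V → ℕ)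
    (H1 : ∀ y ∈ pred, ∀ R ⊆ pred, y ∉ R → (∀ z ∈ pred, μ z < μ y → z ∈ R) →
      (∀ z ∈ R, μ z ≤ μ y) → Contractible ((Cmp (A \ R)).unitSphere y))
    (H2 : Contractible (Cmp (A \ pred))) : Contractible (Cmp A) := by
  suffices Claim : ∀ n (B : Finset (Finset V)), B.card = n → B ⊆ pred →
      (∀ z ∈ pred, z ∉ B → ∀ z' ∈ pred, μ z' < μ z → z' ∉ B) →
      Contractible (Cmp (A \ (pred \ B))) by
    have := Claim pred.card pred rfl le_rfl (by intro z hz hz2; exact absurd hz hz2)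
    simpa using this
  intro n
  induction n with
  | zero =>
    intro B hB _ _
    rw [Finset.card_eq_zero] at hB
    subst hB
    simpa using H2
  | succ n IH =>
    intro B hB hBsub hcl
    have hBne : B.Nonempty := by
      rw [← Finset.card_pos, hB]; omega
    obtain ⟨y, hyB, hymin⟩ := Finset.exists_min_image B μ hBne
    have hypred : y ∈ pred := hBsub hyB
    have hR : A \ (pred \ B) = A \ (pred \ B) := rfl
    refine Contractible.step _ y ?_ ?_ ?_
    · simp only [cmp_verts, Finset.mem_sdiff]
      exact ⟨hsub hypred, fun h => h.2 hyB⟩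
    · refine H1 y hypred (pred \ B) (Finset.sdiff_subset) ?_ ?_ ?_
      · simp only [Finset.mem_sdiff]
        exact fun h => h.2 hyB
      · intro z hz hlt
        simp only [Finset.mem_sdiff]
        refine ⟨hz, fun hzB => ?_⟩
        have := hymin z hzB
        omega
      · intro z hz
        simp only [Finset.mem_sdiff] at hz
        by_contra hgt
        push_neg at hgt
        exact hz.2 (absurd hyB (hcl z hz.1 hz.2 y hypred hgt))
    · rw [cmp_erase]
      have heq : (A \ (pred \ B)).erase y = A \ (pred \ B.erase y) := by
        ext u
        by_cases h4 : u = y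
        · subst h4
          simp [Finset.mem_sdiff, Finset.mem_erase, hypred, hyB]
        · by_cases h2 : u ∈ pred <;> by_cases h3 : u ∈ B <;>
            simp [Finset.mem_sdiff, Finset.mem_erase, h2, h3, h4]
      rw [heq]
      refine IH (B.erase y) ?_ ?_ ?_
      · rw [Finset.card_erase_of_mem hyB, hB]; rfl
      · exact (Finset.erase_subset _ _).trans hBsub
      · intro z hz hzB z' hz' hlt hz'B
        have hz'B2 := Finset.mem_of_mem_erase hz'B
        by_cases hzy : z = y
        · subst hzy
          have := hymin z' hz'B2
          omega
        · have hznB : z ∉ B := fun h => hzB (Finset.mem_erase.mpr ⟨hzy, h⟩)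
          exact hcl z hz hznB z' hz' hlt hz'B2

theorem join_contr (B C : Finset (Finset V)) (hcross : ∀ b ∈ B, ∀ c ∈ C, b ⊂ c)
    (hB : Contractible (Cmp B)) : Contractible (Cmp (B ∪ C)) := by
  suffices H : ∀ n (C : Finset (Finset V)), C.card ≤ n → (∀ b ∈ B, ∀ c ∈ C, b ⊂ c) →
      Contractible (Cmp (B ∪ C)) from H C.card C le_rfl hcross
  intro n
  induction n with
  | zero =>
    intro C hn _
    rw [Nat.le_zero, Finset.card_eq_zero] at hn
    subst hn
    simpa using hB
  | succ n IH =>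
    intro C hn hcross
    rcases Finset.eq_empty_or_nonempty C with rfl | ⟨c, hc⟩
    · simpa using hB
    · have hcBC : c ∈ B ∪ C := Finset.mem_union_right _ hc
      have hcnB : c ∉ B := fun h => ssubset_irrefl c (hcross c h c hc)
      refine Contractible.step _ c hcBC ?_ ?_
      · rw [cmp_unitSphere _ hcBC]
        have heq : (B ∪ C).filter (fun y => c ⊂ y ∨ y ⊂ c)
            = B ∪ C.filter (fun y => c ⊂ y ∨ y ⊂ c) := by
          ext z
          simp only [Finset.mem_filter, Finset.mem_union]
          constructor
          · rintro ⟨hz | hz, hcomp⟩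
            · exact Or.inl hz
            · exact Or.inr ⟨hz, hcomp⟩
          · rintro (hz | ⟨hz, hcomp⟩)
            · exact ⟨Or.inl hz, Or.inr (hcross z hz c hc)⟩
            · exact ⟨Or.inr hz, hcomp⟩
        rw [heq]
        refine IH _ ?_ ?_
        · have hsub : C.filter (fun y => c ⊂ y ∨ y ⊂ c) ⊆ C.erase c := by
            intro z hz
            simp only [Finset.mem_filter] at hz
            refine Finset.mem_erase.mpr ⟨?_, hz.1⟩
            rintro rfl
            rcases hz.2 with h | h <;> exact ssubset_irrefl _ h
          have := Finset.card_le_card hsub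
          have := Finset.card_erase_of_mem hc
          omega
        · intro b hb z hz
          exact hcross b hb z (Finset.mem_of_mem_filter z hz)
      · rw [cmp_erase]
        have heq : (B ∪ C).erase c = B ∪ C.erase c := by
          ext z
          simp only [Finset.mem_erase, Finset.mem_union]
          constructor
          · rintro ⟨hne, hz | hz⟩
            · exact Or.inl hz
            · exact Or.inr ⟨hne, hz⟩
          · rintro (hz | ⟨hne, hz⟩)
            · exact ⟨fun h => hcnB (h ▸ hz), Or.inl hz⟩
            · exact ⟨hne, Or.inr hz⟩
        rw [heq]
        refine IH _ ?_ ?_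
        · have := Finset.card_erase_of_mem hc
          omega
        · intro b hb z hz
          exact hcross b hb z (Finset.mem_of_mem_erase hz)

end FGraph
namespace FGraph

variable {V : Type}

theorem join_sphere : ∀ (n : ℕ) (p q : ℤ) (B C : Finset (Finset V)),
    (B ∪ C).card ≤ n → (∀ b ∈ B, ∀ c ∈ C, b ⊂ c) →
    IsSphere p (Cmp B) → IsSphere q (Cmp C) →
    IsSphere (p + q + 1) (Cmp (B ∪ C)) := by
  intro n
  induction n with
  | zero =>
    intro p q B C hn hcross hB hC
    rw [Nat.le_zero, Finset.card_eq_zero, Finset.union_eq_empty] at hn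
    obtain ⟨rfl, rfl⟩ := hn
    cases hB with
    | empty _ h =>
      cases hC with
      | empty _ h' =>
        have : (-1 : ℤ) + -1 + 1 = -1 := by ring
        rw [this]
        exact IsSphere.empty _ (by simp)
      | punctured q _ hm w hw hc => exact absurd hw (Finset.notMem_empty w)
    | punctured p _ hm v hv hc => exact absurd hv (Finset.notMem_empty v)
  | succ n IH =>
    intro p q B C hn hcross hB hC
    have hdisj : ∀ u, u ∈ B → u ∈ C → False := fun u hB' hC' =>
      ssubset_irrefl u (hcross u hB' u hC')
    cases hB with
    | empty _ h =>
      simp only [cmp_verts] at h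
      subst h
      have : (-1 : ℤ) + q + 1 = q := by ring
      rw [this, Finset.empty_union]
      exact hC
    | punctured p _ hmB v hv hcB =>
      cases hC with
      | empty _ h =>
        simp only [cmp_verts] at h
        subst h
        have : p + (-1) + 1 = p := by ring
        rw [this, Finset.union_empty]
        exact IsSphere.punctured p _ hmB v hv hcB
      | punctured q _ hmC w hw hcC =>
        simp only [cmp_verts] at hv hw
        have hp0 : 0 ≤ p := manifold_nonneg hmB
        have hq0 : 0 ≤ q := manifold_nonneg hmC
        refine IsSphere.punctured (p + q + 1) _ ?_ v ?_ ?_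
        · refine IsManifold.intro _ (by omega) _ ?_
          intro u hu
          simp only [cmp_verts] at hu
          rw [cmp_unitSphere _ hu]
          rcases Finset.mem_union.mp hu with huB | huC
          · have heq : (B ∪ C).filter (fun y => u ⊂ y ∨ y ⊂ u)
                = (B.filter (fun y => u ⊂ y ∨ y ⊂ u)) ∪ C := by
              ext z
              simp only [Finset.mem_filter, Finset.mem_union]
              constructor
              · rintro ⟨hz | hz, hcomp⟩
                · exact Or.inl ⟨hz, hcomp⟩
                · exact Or.inr hz
              · rintro (⟨hz, hcomp⟩ | hz)
                · exact ⟨Or.inl hz, hcomp⟩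
                · exact ⟨Or.inr hz, Or.inl (hcross u huB z hz)⟩
            rw [heq]
            have hsph := manifold_spheres hmB u (by simpa using huB)
            rw [cmp_unitSphere _ huB] at hsph
            have harith : p + q + 1 - 1 = (p - 1) + q + 1 := by ring
            rw [harith]
            refine IH (p-1) q _ _ ?_ ?_ hsph (IsSphere.punctured q _ hmC w hw hcC)
            · have hss : (B.filter (fun y => u ⊂ y ∨ y ⊂ u)) ∪ C ⊂ B ∪ C := by
                constructor
                · intro z hz
                  rcases Finset.mem_union.mp hz with hz | hz
                  · exact Finset.mem_union_left _ (Finset.mem_of_mem_filter z hz)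
                  · exact Finset.mem_union_right _ hz
                · intro hsub
                  have := hsub hu
                  rcases Finset.mem_union.mp this with hz | hz
                  · rcases (Finset.mem_filter.mp hz).2 with h' | h' <;>
                      exact ssubset_irrefl _ h'
                  · exact hdisj u huB hz
              have := Finset.card_lt_card hss
              omega
            · intro b hb z hz
              exact hcross b (Finset.mem_of_mem_filter b hb) z hz
          · have heq : (B ∪ C).filter (fun y => u ⊂ y ∨ y ⊂ u)
                = B ∪ (C.filter (fun y => u ⊂ y ∨ y ⊂ u)) := by
              ext z
              simp only [Finset.mem_filter, Finset.mem_union]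
              constructor
              · rintro ⟨hz | hz, hcomp⟩
                · exact Or.inl hz
                · exact Or.inr ⟨hz, hcomp⟩
              · rintro (hz | ⟨hz, hcomp⟩)
                · exact ⟨Or.inl hz, Or.inr (hcross z hz u huC)⟩
                · exact ⟨Or.inr hz, hcomp⟩
            rw [heq]
            have hsph := manifold_spheres hmC u (by simpa using huC)
            rw [cmp_unitSphere _ huC] at hsph
            have harith : p + q + 1 - 1 = p + (q - 1) + 1 := by ring
            rw [harith]
            refine IH p (q-1) _ _ ?_ ?_ (IsSphere.punctured p _ hmB v hv hcB) hsph
            · have hss : B ∪ (C.filter (fun y => u ⊂ y ∨ y ⊂ u)) ⊂ B ∪ C := by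
                constructor
                · intro z hz
                  rcases Finset.mem_union.mp hz with hz | hz
                  · exact Finset.mem_union_left _ hz
                  · exact Finset.mem_union_right _ (Finset.mem_of_mem_filter z hz)
                · intro hsub
                  have := hsub hu
                  rcases Finset.mem_union.mp this with hz | hz
                  · exact hdisj u hz huC
                  · rcases (Finset.mem_filter.mp hz).2 with h' | h' <;>
                      exact ssubset_irrefl _ h'
              have := Finset.card_lt_card hss
              omega
            · intro b hb z hz
              exact hcross b hb z (Finset.mem_of_mem_filter z hz)
        · simp only [cmp_verts]
          exact Finset.mem_union_left _ hv
        · rw [cmp_erase]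
          have heq : (B ∪ C).erase v = B.erase v ∪ C := by
            ext z
            simp only [Finset.mem_erase, Finset.mem_union]
            constructor
            · rintro ⟨hne, hz | hz⟩
              · exact Or.inl ⟨hne, hz⟩
              · exact Or.inr hz
            · rintro (⟨hne, hz⟩ | hz)
              · exact ⟨hne, Or.inl hz⟩
              · exact ⟨fun h => hdisj v hv (h ▸ hz), Or.inr hz⟩
          rw [heq]
          rw [cmp_erase] at hcB
          refine join_contr _ _ ?_ hcB
          intro b hb z hz
          exact hcross b (Finset.mem_of_mem_erase hb) z hz

theorem join_sphere' {p q : ℤ} {B C : Finset (Finset V)}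
    (hcross : ∀ b ∈ B, ∀ c ∈ C, b ⊂ c)
    (hB : IsSphere p (Cmp B)) (hC : IsSphere q (Cmp C)) :
    IsSphere (p + q + 1) (Cmp (B ∪ C)) :=
  join_sphere (B ∪ C).card p q B C le_rfl hcross hB hC

end FGraph
namespace FGraph

variable {V : Type}

/-- The open interval `(a,x)` in the subset order, as a family. -/
noncomputable def IvF (a x : Finset V) : Finset (Finset V) :=
  x.powerset.filter (fun y => a ⊂ y ∧ y ⊂ x)

@[simp] theorem mem_IvF {a x y : Finset V} : y ∈ IvF a x ↔ a ⊂ y ∧ y ⊂ x := by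
  simp only [IvF, Finset.mem_filter, Finset.mem_powerset, and_iff_right_iff_imp]
  exact fun h => h.2.subset

theorem iv_sphere : ∀ (n : ℕ) (a x : Finset V), (x \ a).card ≤ n → a ⊂ x →
    IsSphere ((x.card : ℤ) - a.card - 2) (Cmp (IvF a x)) := by
  intro n
  induction n with
  | zero =>
    intro a x hn hax
    rw [Nat.le_zero, Finset.card_eq_zero, Finset.sdiff_eq_empty_iff_subset] at hn
    exact absurd hax (fun h => h.2 hn)
  | succ n IH =>
    intro a x hn hax
    have hcard : (x \ a).card + a.card = x.card :=
      Finset.card_sdiff_add_card_eq_card hax.subset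
    have hk1 : 1 ≤ (x \ a).card := by
      rw [Nat.one_le_iff_ne_zero, Ne, Finset.card_eq_zero,
        Finset.sdiff_eq_empty_iff_subset]
      exact fun h => hax.2 h
    by_cases hk : (x \ a).card = 1
    · have hdim : (x.card : ℤ) - a.card - 2 = -1 := by omega
      rw [hdim]
      refine IsSphere.empty _ ?_
      rw [cmp_verts, Finset.eq_empty_iff_forall_notMem]
      intro y hy
      rw [mem_IvF] at hy
      have h1 := Finset.card_lt_card hy.1
      have h2 := Finset.card_lt_card hy.2
      omega
    · have hk2 : 2 ≤ (x \ a).card := by omega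
      obtain ⟨t, ht⟩ : (x \ a).Nonempty := Finset.card_pos.mp (by omega)
      have htx : t ∈ x := (Finset.mem_sdiff.mp ht).1
      have hta : t ∉ a := (Finset.mem_sdiff.mp ht).2
      have hy0mem : insert t a ∈ IvF a x := by
        rw [mem_IvF]
        refine ⟨Finset.ssubset_insert hta, ?_⟩
        refine lt_of_le_of_ne (Finset.insert_subset htx hax.subset) ?_
        intro h
        have : (insert t a).card = a.card + 1 := Finset.card_insert_of_notMem hta
        rw [h] at this
        omega
      refine IsSphere.punctured _ _ ?_ (insert t a) (by simpa using hy0mem) ?_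
      · refine IsManifold.intro _ (by omega) _ ?_
        intro y hy
        simp only [cmp_verts] at hy
        rw [cmp_unitSphere _ hy]
        rw [mem_IvF] at hy
        obtain ⟨hay, hyx⟩ := hy
        have heq : (IvF a x).filter (fun z => y ⊂ z ∨ z ⊂ y) = IvF a y ∪ IvF y x := by
          ext z
          simp only [Finset.mem_filter, Finset.mem_union, mem_IvF]
          constructor
          · rintro ⟨⟨haz, hzx⟩, hz | hz⟩
            · exact Or.inr ⟨hz, hzx⟩
            · exact Or.inl ⟨haz, hz⟩
          · rintro (⟨haz, hzy⟩ | ⟨hyz, hzx⟩)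
            · exact ⟨⟨haz, hzy.trans hyx⟩, Or.inr hzy⟩
            · exact ⟨⟨hay.trans hyz, hzx⟩, Or.inl hyz⟩
        rw [heq]
        have harith : (x.card : ℤ) - a.card - 2 - 1 =
            ((y.card : ℤ) - a.card - 2) + ((x.card : ℤ) - y.card - 2) + 1 := by ring
        rw [harith]
        refine join_sphere' ?_ (IH a y ?_ hay) (IH y x ?_ hyx)
        · intro b hb c hc
          rw [mem_IvF] at hb hc
          exact hb.2.trans hc.1
        · obtain ⟨s, hs⟩ := Finset.exists_of_ssubset hyx
          have hss : y \ a ⊂ x \ a := by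
            refine lt_of_le_of_ne (Finset.sdiff_subset_sdiff hyx.subset le_rfl) ?_
            intro h
            have : s ∈ y \ a := by
              rw [h, Finset.mem_sdiff]
              exact ⟨hs.1, fun h' => hs.2 (hay.subset h')⟩
            exact hs.2 (Finset.mem_sdiff.mp this).1
          have := Finset.card_lt_card hss
          omega
        · obtain ⟨s, hs⟩ := Finset.exists_of_ssubset hay
          have hss : x \ y ⊂ x \ a := by
            refine lt_of_le_of_ne (Finset.sdiff_subset_sdiff le_rfl hay.subset) ?_
            intro h
            have : s ∈ x \ y := by
              rw [h, Finset.mem_sdiff]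
              exact ⟨hyx.subset hs.1, hs.2⟩
            exact (Finset.mem_sdiff.mp this).2 hs.1
          have := Finset.card_lt_card hss
          omega
      · rw [cmp_erase]
        set y0 := insert t a with hy0
        set A := (IvF a x).erase y0 with hA
        refine collapse A (A.filter (fun y => t ∈ y)) (Finset.filter_subset _ _)
          Finset.card ?_ ?_
        · intro y hy R hRsub hynR hRlow _
          simp only [Finset.mem_filter, hA, Finset.mem_erase, mem_IvF] at hy
          obtain ⟨⟨hyne, hay, hyx⟩, hty⟩ := hy
          have hyA : y ∈ A := by
            rw [hA, Finset.mem_erase, mem_IvF]; exact ⟨hyne, hay, hyx⟩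
          have hyAR : y ∈ A \ R := Finset.mem_sdiff.mpr ⟨hyA, hynR⟩
          rw [cmp_unitSphere _ (by simpa using hyAR)]
          have hz0y : y.erase t ⊂ y := Finset.erase_ssubset hty
          have haz0 : a ⊂ y.erase t := by
            refine lt_of_le_of_ne (Finset.subset_erase.mpr ⟨hay.subset, hta⟩) ?_
            intro h
            apply hyne
            rw [hy0, h, Finset.insert_erase hty]
          have hz0A : y.erase t ∈ A := by
            rw [hA, Finset.mem_erase, mem_IvF]
            refine ⟨?_, haz0, hz0y.trans hyx⟩
            intro h
            have : t ∈ y.erase t := by rw [h, hy0]; exact Finset.mem_insert_self t a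
            exact (Finset.notMem_erase t y) this
          have hz0R : y.erase t ∉ R := by
            intro h
            have := hRsub h
            simp only [Finset.mem_filter] at this
            exact (Finset.notMem_erase t y) this.2
          refine cmp_dominated _ (y.erase t) ?_ ?_
          · simp only [Finset.mem_filter, Finset.mem_sdiff]
            exact ⟨⟨hz0A, hz0R⟩, Or.inr hz0y⟩
          · intro w hw hwne
            simp only [Finset.mem_filter, Finset.mem_sdiff] at hw
            obtain ⟨⟨hwA, hwR⟩, hcomp⟩ := hw
            rcases hcomp with hyw | hwy
            · exact Or.inl (hz0y.trans hyw)
            · right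
              have htw : t ∉ w := by
                intro htw
                apply hwR
                apply hRlow
                · simp only [Finset.mem_filter]
                  exact ⟨hwA, htw⟩
                · exact Finset.card_lt_card hwy
              refine lt_of_le_of_ne (Finset.subset_erase.mpr ⟨hwy.subset, htw⟩) hwne
        · refine cmp_dominated _ (x.erase t) ?_ ?_
          · simp only [Finset.mem_sdiff, Finset.mem_filter, hA, Finset.mem_erase,
              mem_IvF]
            have h1 : a ⊂ x.erase t := by
              refine lt_of_le_of_ne (Finset.subset_erase.mpr ⟨hax.subset, hta⟩) ?_
              intro h
              have := Finset.card_erase_of_mem htx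
              rw [← h] at this
              omega
            have h2 : x.erase t ⊂ x := Finset.erase_ssubset htx
            have h3 : x.erase t ≠ y0 := by
              intro h
              have : t ∈ x.erase t := by rw [h, hy0]; exact Finset.mem_insert_self t a
              exact (Finset.notMem_erase t x) this
            refine ⟨⟨h3, h1, h2⟩, ?_⟩
            intro hmem
            exact hmem.2.1 rfl
          · intro w hw hwne
            simp only [Finset.mem_sdiff, Finset.mem_filter, hA, Finset.mem_erase,
              mem_IvF] at hw
            obtain ⟨⟨hwne0, haw, hwx⟩, hwpred⟩ := hw
            right
            have htw : t ∉ w := by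
              intro htw
              exact hwpred ⟨⟨hwne0, haw, hwx⟩, htw⟩
            refine lt_of_le_of_ne (Finset.subset_erase.mpr ⟨hwx.subset, htw⟩) hwne

theorem iv_sphere' {a x : Finset V} (hax : a ⊂ x) :
    IsSphere ((x.card : ℤ) - a.card - 2) (Cmp (IvF a x)) :=
  iv_sphere _ a x le_rfl hax

end FGraph
namespace FGraph

variable {V : Type}

/-- Sets containing `p0`, meeting `N`, properly contained in `N ∪ P`. -/
noncomputable def DF (N P : Finset V) (p0 : V) : Finset (Finset V) :=
  (N ∪ P).powerset.filter (fun y => y ⊂ N ∪ P ∧ p0 ∈ y ∧ (y ∩ N).Nonempty)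

@[simp] theorem mem_DF {N P : Finset V} {p0 : V} {y : Finset V} :
    y ∈ DF N P p0 ↔ y ⊂ N ∪ P ∧ p0 ∈ y ∧ (y ∩ N).Nonempty := by
  simp only [DF, Finset.mem_filter, Finset.mem_powerset, and_iff_right_iff_imp]
  exact fun h => h.1.subset

theorem d_contr : ∀ (n : ℕ) (N P : Finset V) (p0 : V), N.card ≤ n → p0 ∈ P →
    N.Nonempty → Disjoint N P → 2 ≤ P.card → Contractible (Cmp (DF N P p0)) := by
  intro n
  induction n with
  | zero =>
    intro N P p0 hn hp0 hN _ _
    rw [Nat.le_zero, Finset.card_eq_zero] at hn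
    subst hn
    exact absurd hN (by simp)
  | succ n IH =>
    intro N P p0 hn hp0 hN hdisj hP2
    obtain ⟨p1, hp1, hp1ne⟩ : ∃ p1 ∈ P, p1 ≠ p0 :=
      Finset.exists_mem_ne (by omega) p0
    obtain ⟨n0, hn0⟩ := hN
    have hn0P : n0 ∉ P := Finset.disjoint_left.mp hdisj hn0
    have hp0N : p0 ∉ N := Finset.disjoint_right.mp hdisj hp0
    have hv0 : insert n0 {p0} ∈ DF N P p0 := by
      rw [mem_DF]
      refine ⟨?_, by simp, ⟨n0, by simp [hn0]⟩⟩
      refine ssub ?_ ?_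
      · intro u hu
        rcases Finset.mem_insert.mp hu with rfl | hu
        · exact Finset.mem_union_left _ hn0
        · rw [Finset.mem_singleton] at hu
          subst hu
          exact Finset.mem_union_right _ hp0
      · intro h
        have : p1 ∈ insert n0 ({p0} : Finset V) := by
          rw [h]; exact Finset.mem_union_right _ hp1
        rcases Finset.mem_insert.mp this with h' | h'
        · exact hn0P (h' ▸ hp1)
        · exact hp1ne (Finset.mem_singleton.mp h')
    by_cases hNone : N.card = 1
    · -- dominated by {n0, p0}
      refine cmp_dominated _ (insert n0 {p0}) (by simpa using hv0) ?_
      intro w hw hwne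
      simp only [cmp_verts, mem_DF] at hw
      obtain ⟨hwsub, hp0w, ⟨a, ha⟩⟩ := hw
      have haN : a ∈ N := (Finset.mem_inter.mp ha).2
      have hNs : N = {n0} := by
        obtain ⟨b, hb⟩ := Finset.card_eq_one.mp hNone
        rw [hb] at hn0
        rw [Finset.mem_singleton] at hn0
        rw [hb, hn0]
      have : a = n0 := by
        rw [hNs, Finset.mem_singleton] at haN
        exact haN
      subst this
      left
      refine ssub ?_ (fun h => hwne h.symm)
      intro u hu
      rcases Finset.mem_insert.mp hu with rfl | hu
      · exact (Finset.mem_inter.mp ha).1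
      · rw [Finset.mem_singleton] at hu; subst hu; exact hp0w
    · have hN2 : 2 ≤ N.card := by
        have := Finset.card_pos.mpr ⟨n0, hn0⟩
        omega
      set A := DF N P p0 with hA
      refine collapse A (A.filter (fun y => n0 ∉ y)) (Finset.filter_subset _ _)
        (fun y => (N ∪ P).card - y.card) ?_ ?_
      · intro y hy R hRsub hynR hRlow hRhigh
        simp only [Finset.mem_filter, hA, mem_DF] at hy
        obtain ⟨⟨hysub, hp0y, hyN⟩, hn0y⟩ := hy
        have hyA : y ∈ A := by rw [hA, mem_DF]; exact ⟨hysub, hp0y, hyN⟩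
        have hyAR : y ∈ A \ R := Finset.mem_sdiff.mpr ⟨hyA, hynR⟩
        rw [cmp_unitSphere _ (by simpa using hyAR)]
        by_cases hyy : y = (N ∪ P).erase n0
        · -- the big saucer: sphere is DF (N.erase n0) P p0
          have hR : R = ∅ := by
            rw [Finset.eq_empty_iff_forall_notMem]
            intro z hz
            have hzp := hRsub hz
            simp only [Finset.mem_filter, hA, mem_DF] at hzp
            obtain ⟨⟨hzsub, _, _⟩, hzn0⟩ := hzp
            have hle : (N ∪ P).card - z.card ≤ (N ∪ P).card - y.card := hRhigh z hz
            have h1 : z.card < (N ∪ P).card := Finset.card_lt_card hzsub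
            have h2 : y.card = (N ∪ P).card - 1 := by
              rw [hyy, Finset.card_erase_of_mem (Finset.mem_union_left _ hn0)]
            -- μ z ≤ μ y = 1, so z.card ≥ (N∪P).card - 1, so z = y
            have h3 : z.card = (N ∪ P).card - 1 := by omega
            have : z = y := by
              rw [hyy]
              apply Finset.eq_of_subset_of_card_le
              · intro u hu
                rw [Finset.mem_erase]
                refine ⟨?_, hzsub.subset hu⟩
                rintro rfl
                exact hzn0 hu
              · rw [Finset.card_erase_of_mem (Finset.mem_union_left _ hn0)]
                omega
            exact hynR (this ▸ hz)
          subst hR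
          have heq : (A \ ∅).filter (fun z => y ⊂ z ∨ z ⊂ y)
              = DF (N.erase n0) P p0 := by
            ext z
            simp only [Finset.sdiff_empty, Finset.mem_filter, hA, mem_DF]
            constructor
            · rintro ⟨⟨hzsub, hzp0, hzN⟩, hyz | hzy⟩
              · exfalso
                have h1 := Finset.card_lt_card hyz
                have h2 := Finset.card_lt_card hzsub
                have h3 : y.card = (N ∪ P).card - 1 := by
                  rw [hyy, Finset.card_erase_of_mem (Finset.mem_union_left _ hn0)]
                omega
              · have hn0z : n0 ∉ z := by
                  intro h
                  have := hzy.subset h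
                  rw [hyy, Finset.mem_erase] at this
                  exact this.1 rfl
                refine ⟨?_, hzp0, ?_⟩
                · have hNPe : (N ∪ P).erase n0 = N.erase n0 ∪ P := by
                    rw [Finset.erase_union_distrib, Finset.erase_eq_of_notMem hn0P]
                  rw [← hNPe, ← hyy]
                  exact hzy
                · obtain ⟨a, ha⟩ := hzN
                  rw [Finset.mem_inter] at ha
                  refine ⟨a, Finset.mem_inter.mpr ⟨ha.1, Finset.mem_erase.mpr ⟨?_, ha.2⟩⟩⟩
                  rintro rfl
                  exact hn0z ha.1
            · rintro ⟨hzsub, hzp0, hzN⟩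
              have hzy : z ⊂ y := by
                have hNPe : (N ∪ P).erase n0 = N.erase n0 ∪ P := by
                  rw [Finset.erase_union_distrib, Finset.erase_eq_of_notMem hn0P]
                rw [hyy, hNPe]
                exact hzsub
              refine ⟨⟨hzy.trans ?_, hzp0, ?_⟩, Or.inr hzy⟩
              · rw [hyy]
                exact Finset.erase_ssubset (Finset.mem_union_left _ hn0)
              · obtain ⟨a, ha⟩ := hzN
                rw [Finset.mem_inter, Finset.mem_erase] at ha
                exact ⟨a, Finset.mem_inter.mpr ⟨ha.1, ha.2.2⟩⟩
          rw [heq]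
          refine IH (N.erase n0) P p0 ?_ hp0 ?_ ?_ hP2
          · have := Finset.card_erase_of_mem hn0
            omega
          · rw [← Finset.card_pos, Finset.card_erase_of_mem hn0]
            omega
          · exact hdisj.mono_left (Finset.erase_subset _ _)
        · -- dominated by insert n0 y
          have hvA : insert n0 y ∈ A := by
            rw [hA, mem_DF]
            refine ⟨?_, Finset.mem_insert_of_mem hp0y, ⟨n0, by simp [hn0]⟩⟩
            refine ssub
              (Finset.insert_subset (Finset.mem_union_left _ hn0) hysub.subset) ?_
            intro h
            apply hyy
            rw [← h, Finset.erase_insert hn0y]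
          have hvR : insert n0 y ∉ R := by
            intro h
            have := hRsub h
            simp only [Finset.mem_filter] at this
            exact this.2 (Finset.mem_insert_self n0 y)
          refine cmp_dominated _ (insert n0 y) ?_ ?_
          · simp only [Finset.mem_filter, Finset.mem_sdiff]
            exact ⟨⟨hvA, hvR⟩, Or.inl (Finset.ssubset_insert hn0y)⟩
          · intro w hw hwne
            simp only [Finset.mem_filter, Finset.mem_sdiff] at hw
            obtain ⟨⟨hwA, hwR⟩, hcomp⟩ := hw
            rcases hcomp with hyw | hwy
            · -- y ⊂ w
              by_cases hn0w : n0 ∈ w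
              · left
                exact ssub (Finset.insert_subset hn0w hyw.subset)
                  (fun h => hwne h.symm)
              · exfalso
                apply hwR
                apply hRlow
                · simp only [Finset.mem_filter]
                  exact ⟨hwA, hn0w⟩
                · have h1 := Finset.card_lt_card hyw
                  have h2 : w ∈ A := hwA
                  rw [hA, mem_DF] at h2
                  have h3 := Finset.card_lt_card h2.1
                  have h4 := Finset.card_lt_card hysub
                  show (N ∪ P).card - w.card < (N ∪ P).card - y.card
                  omega
            · right
              exact hwy.trans (Finset.ssubset_insert hn0y)
      · -- remaining: sets containing n0; dominated by {n0, p0}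
        refine cmp_dominated _ (insert n0 {p0}) ?_ ?_
        · simp only [Finset.mem_sdiff, Finset.mem_filter, not_and, not_not]
          exact ⟨by simpa using hv0, fun _ => Finset.mem_insert_self n0 {p0}⟩
        · intro w hw hwne
          simp only [Finset.mem_sdiff, Finset.mem_filter, not_and, not_not] at hw
          obtain ⟨hwA, hwn0⟩ := hw
          have hn0w : n0 ∈ w := hwn0 hwA
          have hp0w : p0 ∈ w := by
            have := hwA
            rw [hA, mem_DF] at this
            exact this.2.1
          left
          refine ssub ?_ (fun h => hwne h.symm)
          intro u hu
          rcases Finset.mem_insert.mp hu with rfl | hu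
          · exact hn0w
          · rw [Finset.mem_singleton] at hu; subst hu; exact hp0w
end FGraph
namespace FGraph

variable {V : Type}

/-- Proper subsets of `N ∪ P` meeting both `N` and `P`. -/
noncomputable def LvF (N P : Finset V) : Finset (Finset V) :=
  (N ∪ P).powerset.filter (fun y => y ⊂ N ∪ P ∧ (y ∩ N).Nonempty ∧ (y ∩ P).Nonempty)

@[simp] theorem mem_LvF {N P y : Finset V} :
    y ∈ LvF N P ↔ y ⊂ N ∪ P ∧ (y ∩ N).Nonempty ∧ (y ∩ P).Nonempty := by
  simp only [LvF, Finset.mem_filter, Finset.mem_powerset, and_iff_right_iff_imp]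
  exact fun h => h.1.subset

theorem lv_swap (N P : Finset V) : LvF N P = LvF P N := by
  ext y
  rw [mem_LvF, mem_LvF, Finset.union_comm]
  tauto

theorem lv_punct (N P : Finset V) (p0 : V) (hp0 : p0 ∈ P) (hP2 : 2 ≤ P.card)
    (hN : N.Nonempty) (hdisj : Disjoint N P) :
    Contractible (Cmp ((LvF N P).erase ((N ∪ P).erase p0))) := by
  obtain ⟨n0, hn0⟩ := hN
  have hp0N : p0 ∉ N := Finset.disjoint_right.mp hdisj hp0
  set z0 := (N ∪ P).erase p0 with hz0
  set A := (LvF N P).erase z0 with hA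
  have hp0z0 : p0 ∉ z0 := Finset.notMem_erase _ _
  refine collapse A (A.filter (fun y => p0 ∉ y)) (Finset.filter_subset _ _)
    (fun y => (N ∪ P).card - y.card) ?_ ?_
  · intro y hy R hRsub hynR hRlow _
    simp only [Finset.mem_filter, hA, Finset.mem_erase, mem_LvF] at hy
    obtain ⟨⟨hyz0, hysub, hyN, hyP⟩, hp0y⟩ := hy
    have hyA : y ∈ A := by
      rw [hA, Finset.mem_erase, mem_LvF]; exact ⟨hyz0, hysub, hyN, hyP⟩
    have hyAR : y ∈ A \ R := Finset.mem_sdiff.mpr ⟨hyA, hynR⟩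
    rw [cmp_unitSphere _ (by simpa using hyAR)]
    -- dominated by insert p0 y
    have hvLv : insert p0 y ∈ LvF N P := by
      rw [mem_LvF]
      refine ⟨?_, ?_, ⟨p0, by simp [hp0]⟩⟩
      · refine ssub (Finset.insert_subset (Finset.mem_union_right _ hp0) hysub.subset) ?_
        intro h
        apply hyz0
        rw [hz0, ← h, Finset.erase_insert hp0y]
      · obtain ⟨a, ha⟩ := hyN
        rw [Finset.mem_inter] at ha
        exact ⟨a, Finset.mem_inter.mpr ⟨Finset.mem_insert_of_mem ha.1, ha.2⟩⟩
    have hvA : insert p0 y ∈ A := by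
      rw [hA, Finset.mem_erase]
      refine ⟨?_, hvLv⟩
      intro h
      exact hp0z0 (h ▸ Finset.mem_insert_self p0 y)
    have hvR : insert p0 y ∉ R := by
      intro h
      have := hRsub h
      simp only [Finset.mem_filter] at this
      exact this.2 (Finset.mem_insert_self p0 y)
    refine cmp_dominated _ (insert p0 y) ?_ ?_
    · simp only [Finset.mem_filter, Finset.mem_sdiff]
      exact ⟨⟨hvA, hvR⟩, Or.inl (Finset.ssubset_insert hp0y)⟩
    · intro w hw hwne
      simp only [Finset.mem_filter, Finset.mem_sdiff] at hw
      obtain ⟨⟨hwA, hwR⟩, hcomp⟩ := hw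
      rcases hcomp with hyw | hwy
      · by_cases hp0w : p0 ∈ w
        · left
          exact ssub (Finset.insert_subset hp0w hyw.subset) (fun h => hwne h.symm)
        · exfalso
          apply hwR
          apply hRlow
          · simp only [Finset.mem_filter]
            exact ⟨hwA, hp0w⟩
          · have h1 := Finset.card_lt_card hyw
            have h2 : w ∈ A := hwA
            rw [hA, Finset.mem_erase, mem_LvF] at h2
            have h3 := Finset.card_lt_card h2.2.1
            show (N ∪ P).card - w.card < (N ∪ P).card - y.card
            omega
      · right
        exact hwy.trans (Finset.ssubset_insert hp0y)
  · -- remaining: sets containing p0 = DF N P p0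
    have heq : A \ (A.filter (fun y => p0 ∉ y)) = DF N P p0 := by
      ext y
      simp only [Finset.mem_sdiff, Finset.mem_filter, not_and, not_not, hA,
        Finset.mem_erase, mem_LvF, mem_DF]
      constructor
      · rintro ⟨⟨hyz0, hysub, hyN, hyP⟩, hp0y⟩
        exact ⟨hysub, hp0y ⟨hyz0, hysub, hyN, hyP⟩, hyN⟩
      · rintro ⟨hysub, hp0y, hyN⟩
        have hyz0 : y ≠ z0 := by
          intro h
          exact hp0z0 (h ▸ hp0y)
        exact ⟨⟨hyz0, hysub, hyN, ⟨p0, Finset.mem_inter.mpr ⟨hp0y, hp0⟩⟩⟩,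
          fun _ => hp0y⟩
    rw [heq]
    exact d_contr N.card N P p0 le_rfl hp0 ⟨n0, hn0⟩ hdisj hP2

theorem lv_aux (N P : Finset V) (hN : N.Nonempty) (hP : P.Nonempty)
    (hdisj : Disjoint N P) (hP2 : 2 ≤ P.card)
    (IH : ∀ N' P' : Finset V, N'.Nonempty → P'.Nonempty → Disjoint N' P' →
      (N' ∪ P').card < (N ∪ P).card →
      IsSphere ((N'.card : ℤ) + P'.card - 3) (Cmp (LvF N' P'))) :
    IsSphere ((N.card : ℤ) + P.card - 3) (Cmp (LvF N P)) := by
  have hcardU : (N ∪ P).card = N.card + P.card := Finset.card_union_of_disjoint hdisj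
  have hN1 : 1 ≤ N.card := Finset.card_pos.mpr hN
  obtain ⟨p0, hp0⟩ := hP
  have hz0 : (N ∪ P).erase p0 ∈ LvF N P := by
    rw [mem_LvF]
    refine ⟨Finset.erase_ssubset (Finset.mem_union_right _ hp0), ?_, ?_⟩
    · obtain ⟨n0, hn0⟩ := hN
      refine ⟨n0, Finset.mem_inter.mpr ⟨Finset.mem_erase.mpr ⟨?_, Finset.mem_union_left _ hn0⟩, hn0⟩⟩
      rintro rfl
      exact Finset.disjoint_left.mp hdisj hn0 hp0
    · obtain ⟨p1, hp1, hp1ne⟩ : ∃ p1 ∈ P, p1 ≠ p0 :=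
        Finset.exists_mem_ne (by omega) p0
      exact ⟨p1, Finset.mem_inter.mpr ⟨Finset.mem_erase.mpr
        ⟨hp1ne, Finset.mem_union_right _ hp1⟩, hp1⟩⟩
  refine IsSphere.punctured _ _ ?_ ((N ∪ P).erase p0) (by simpa using hz0) ?_
  · refine IsManifold.intro _ (by omega) _ ?_
    intro y hy
    simp only [cmp_verts] at hy
    rw [cmp_unitSphere _ hy]
    rw [mem_LvF] at hy
    obtain ⟨hysub, hyN, hyP⟩ := hy
    have hyunion : (y ∩ N) ∪ (y ∩ P) = y := by
      rw [← Finset.inter_union_distrib_left]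
      exact Finset.inter_eq_left.mpr hysub.subset
    have heq : (LvF N P).filter (fun z => y ⊂ z ∨ z ⊂ y)
        = LvF (y ∩ N) (y ∩ P) ∪ IvF y (N ∪ P) := by
      ext z
      simp only [Finset.mem_filter, Finset.mem_union, mem_LvF, mem_IvF, hyunion]
      constructor
      · rintro ⟨⟨hzsub, hzN, hzP⟩, hyz | hzy⟩
        · exact Or.inr ⟨hyz, hzsub⟩
        · refine Or.inl ⟨hzy, ?_, ?_⟩
          · obtain ⟨a, ha⟩ := hzN
            rw [Finset.mem_inter] at ha
            exact ⟨a, by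
              rw [Finset.mem_inter, Finset.mem_inter]
              exact ⟨ha.1, hzy.subset ha.1, ha.2⟩⟩
          · obtain ⟨a, ha⟩ := hzP
            rw [Finset.mem_inter] at ha
            exact ⟨a, by
              rw [Finset.mem_inter, Finset.mem_inter]
              exact ⟨ha.1, hzy.subset ha.1, ha.2⟩⟩
      · rintro (⟨hzy, hzN, hzP⟩ | ⟨hyz, hzsub⟩)
        · refine ⟨⟨hzy.trans hysub, ?_, ?_⟩, Or.inr hzy⟩
          · obtain ⟨a, ha⟩ := hzN
            rw [Finset.mem_inter, Finset.mem_inter] at ha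
            exact ⟨a, Finset.mem_inter.mpr ⟨ha.1, ha.2.2⟩⟩
          · obtain ⟨a, ha⟩ := hzP
            rw [Finset.mem_inter, Finset.mem_inter] at ha
            exact ⟨a, Finset.mem_inter.mpr ⟨ha.1, ha.2.2⟩⟩
        · refine ⟨⟨hzsub, ?_, ?_⟩, Or.inl hyz⟩
          · obtain ⟨a, ha⟩ := hyN
            rw [Finset.mem_inter] at ha
            exact ⟨a, Finset.mem_inter.mpr ⟨hyz.subset ha.1, ha.2⟩⟩
          · obtain ⟨a, ha⟩ := hyP
            rw [Finset.mem_inter] at ha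
            exact ⟨a, Finset.mem_inter.mpr ⟨hyz.subset ha.1, ha.2⟩⟩
    rw [heq]
    have hydisj : Disjoint (y ∩ N) (y ∩ P) :=
      hdisj.mono (Finset.inter_subset_right) (Finset.inter_subset_right)
    have hycard : (y ∩ N).card + (y ∩ P).card = y.card := by
      rw [← Finset.card_union_of_disjoint hydisj, hyunion]
    have hylt := Finset.card_lt_card hysub
    have harith : (N.card : ℤ) + P.card - 3 - 1 =
        (((y ∩ N).card : ℤ) + ((y ∩ P).card : ℤ) - 3) +
        (((N ∪ P).card : ℤ) - y.card - 2) + 1 := by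
      push_cast
      omega
    rw [harith]
    refine join_sphere' ?_ ?_ (iv_sphere' hysub)
    · intro b hb c hc
      rw [mem_LvF] at hb
      rw [mem_IvF] at hc
      have : b ⊂ (y ∩ N) ∪ (y ∩ P) := hb.1
      rw [hyunion] at this
      exact this.trans hc.1
    · exact IH _ _ hyN hyP hydisj (by rw [hyunion]; omega)
  · rw [cmp_erase]
    exact lv_punct N P p0 hp0 hP2 hN hdisj

theorem lv_sphere : ∀ (n : ℕ) (N P : Finset V), (N ∪ P).card ≤ n → N.Nonempty →
    P.Nonempty → Disjoint N P →
    IsSphere ((N.card : ℤ) + P.card - 3) (Cmp (LvF N P)) := by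
  intro n
  induction n with
  | zero =>
    intro N P hn hN hP hdisj
    rw [Nat.le_zero, Finset.card_eq_zero, Finset.union_eq_empty] at hn
    rw [hn.1] at hN
    exact absurd hN (by simp)
  | succ n IH =>
    intro N P hn hN hP hdisj
    have hcardU : (N ∪ P).card = N.card + P.card := Finset.card_union_of_disjoint hdisj
    have hN1 : 1 ≤ N.card := Finset.card_pos.mpr hN
    have hP1 : 1 ≤ P.card := Finset.card_pos.mpr hP
    by_cases hm2 : N.card + P.card ≤ 2
    · have hdim : (N.card : ℤ) + P.card - 3 = -1 := by omega
      rw [hdim]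
      refine IsSphere.empty _ ?_
      rw [cmp_verts, Finset.eq_empty_iff_forall_notMem]
      intro y hy
      rw [mem_LvF] at hy
      obtain ⟨hysub, ⟨a, ha⟩, ⟨b, hb⟩⟩ := hy
      rw [Finset.mem_inter] at ha hb
      have hab : a ≠ b := by
        rintro rfl
        exact Finset.disjoint_left.mp hdisj ha.2 hb.2
      have hsub : ({a, b} : Finset V) ⊆ y := by
        intro u hu
        rcases Finset.mem_insert.mp hu with rfl | hu
        · exact ha.1
        · rw [Finset.mem_singleton] at hu; subst hu; exact hb.1
      have h2 : ({a, b} : Finset V).card = 2 := Finset.card_pair hab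
      have h3 := Finset.card_le_card hsub
      have h4 := Finset.card_lt_card hysub
      omega
    · have hIH : ∀ N' P' : Finset V, N'.Nonempty → P'.Nonempty → Disjoint N' P' →
          (N' ∪ P').card < (N ∪ P).card →
          IsSphere ((N'.card : ℤ) + P'.card - 3) (Cmp (LvF N' P')) := by
        intro N' P' h1 h2 h3 h4
        exact IH N' P' (by omega) h1 h2 h3
      rcases le_or_gt 2 P.card with hP2 | hPlt
      · exact lv_aux N P hN hP hdisj hP2 hIH
      · have hN2 : 2 ≤ N.card := by omega
        have hswap := lv_swap N P
        rw [hswap]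
        have harith : (N.card : ℤ) + P.card - 3 = (P.card : ℤ) + N.card - 3 := by ring
        rw [harith]
        refine lv_aux P N hP hN hdisj.symm hN2 ?_
        intro N' P' h1 h2 h3 h4
        rw [Finset.union_comm P N] at h4
        exact hIH N' P' h1 h2 h3 h4

theorem lv_sphere' {N P : Finset V} (hN : N.Nonempty) (hP : P.Nonempty)
    (hdisj : Disjoint N P) :
    IsSphere ((N.card : ℤ) + P.card - 3) (Cmp (LvF N P)) :=
  lv_sphere _ N P le_rfl hN hP hdisj

end FGraph
namespace FGraph

variable {V : Type}

theorem simplex_mem_verts {G : FGraph V} {s : Finset V} (h : G.IsSimplex s) {a : V}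
    (ha : a ∈ s) : a ∈ G.verts :=
  h.2.1 ha

theorem simplex_subset {G : FGraph V} {s t : Finset V} (h : G.IsSimplex s)
    (hts : t ⊆ s) (htne : t.Nonempty) : G.IsSimplex t :=
  ⟨htne, (Finset.coe_subset.mpr hts).trans h.2.1,
    fun a ha b hb hab => h.2.2 a (hts ha) b (hts hb) hab⟩

theorem sphere_verts_mem {G : FGraph V} {v a : V} :
    a ∈ (G.unitSphere v).verts ↔ a ∈ G.verts ∧ G.Adj v a := by
  simp only [unitSphere, induce, Finset.mem_filter]

theorem erase_verts_mem {G : FGraph V} {v a : V} :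
    a ∈ (G.erase v).verts ↔ a ∈ G.verts ∧ a ≠ v := by
  simp only [erase, induce, Finset.mem_filter]

theorem insert_sdiff_self' {v : V} {x : Finset V} (hvx : v ∉ x) :
    insert v x \ x = {v} := by
  ext u
  rw [Finset.mem_sdiff, Finset.mem_insert, Finset.mem_singleton]
  constructor
  · rintro ⟨rfl | hu, hux⟩
    · rfl
    · exact absurd hu hux
  · rintro rfl
    exact ⟨Or.inl rfl, hvx⟩

theorem singleton_simplex {G : FGraph V} {v : V} (hv : v ∈ G.verts) :
    G.IsSimplex {v} := by
  refine ⟨⟨v, Finset.mem_singleton_self v⟩, ?_, ?_⟩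
  · intro a ha
    rw [Finset.mem_singleton] at ha
    subst ha
    exact hv
  · intro a ha b hb hab
    rw [Finset.mem_singleton] at ha hb
    subst ha; subst hb
    exact absurd rfl hab

/-- Simplices of `H` shifted by a disjoint base set `x`. -/
noncomputable def ExtF (H : FGraph V) (x : Finset V) : Finset (Finset V) :=
  (H.verts ∪ x).powerset.filter (fun y => x ⊂ y ∧ H.IsSimplex (y \ x))

@[simp] theorem mem_ExtF {H : FGraph V} {x y : Finset V} :
    y ∈ ExtF H x ↔ x ⊂ y ∧ H.IsSimplex (y \ x) := by
  simp only [ExtF, Finset.mem_filter, Finset.mem_powerset, and_iff_right_iff_imp]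
  rintro ⟨hxy, hs⟩
  intro u hu
  by_cases hux : u ∈ x
  · exact Finset.mem_union_right _ hux
  · exact Finset.mem_union_left _ (simplex_mem_verts hs (Finset.mem_sdiff.mpr ⟨hu, hux⟩))

theorem ext_contr {H : FGraph V} (hH : Contractible H) :
    ∀ x : Finset V, (∀ a ∈ x, a ∉ H.verts) → Contractible (Cmp (ExtF H x)) := by
  induction hH with
  | single G v hGv =>
    intro x hdisj
    have hvx : v ∉ x := fun h => hdisj v h (hGv ▸ Finset.mem_singleton_self v)
    refine Contractible.single _ (insert v x) ?_
    rw [cmp_verts, Finset.eq_singleton_iff_unique_mem]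
    constructor
    · rw [mem_ExtF, insert_sdiff_self' hvx]
      exact ⟨Finset.ssubset_insert hvx,
        singleton_simplex (hGv ▸ Finset.mem_singleton_self v)⟩
    · intro y hy
      rw [mem_ExtF] at hy
      obtain ⟨hxy, hne, hsub, _⟩ := hy
      have hyv : y \ x = {v} := by
        apply Finset.eq_of_subset_of_card_le
        · intro u hu
          have : u ∈ G.verts := hsub hu
          rw [hGv] at this
          exact this
        · rw [Finset.card_singleton]
          exact Finset.card_pos.mpr hne
      have hyu : y = x ∪ (y \ x) := (Finset.union_sdiff_of_subset hxy.subset).symm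
      rw [hyv] at hyu
      rw [hyu, Finset.union_comm]
      rfl
  | step G v hv h1 h2 ih1 ih2 =>
    intro x hdisj
    have hvx : v ∉ x := fun h => hdisj v h hv
    set A := ExtF G x with hA
    set y0 := insert v x with hy0
    have hy0A : y0 ∈ A := by
      rw [hA, mem_ExtF, hy0, insert_sdiff_self' hvx]
      exact ⟨Finset.ssubset_insert hvx, singleton_simplex hv⟩
    refine collapse A (A.filter (fun y => v ∈ y)) (Finset.filter_subset _ _)
      Finset.card ?_ ?_
    · intro y hy R hRsub hynR hRlow hRhigh
      simp only [Finset.mem_filter, hA, mem_ExtF] at hy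
      obtain ⟨⟨hxy, hsimp⟩, hvy⟩ := hy
      have hyA : y ∈ A := by rw [hA, mem_ExtF]; exact ⟨hxy, hsimp⟩
      have hyAR : y ∈ A \ R := Finset.mem_sdiff.mpr ⟨hyA, hynR⟩
      rw [cmp_unitSphere _ (by simpa using hyAR)]
      by_cases hyy0 : y = y0
      · subst hyy0
        have hR : R = ∅ := by
          rw [Finset.eq_empty_iff_forall_notMem]
          intro z hz
          have hzp := hRsub hz
          simp only [Finset.mem_filter, hA, mem_ExtF] at hzp
          obtain ⟨⟨hxz, _⟩, hvz⟩ := hzp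
          have hsub : y0 ⊆ z := Finset.insert_subset hvz hxz.subset
          have hcard : z.card ≤ y0.card := hRhigh z hz
          have : z = y0 := (Finset.eq_of_subset_of_card_le hsub hcard).symm
          exact hynR (this ▸ hz)
        subst hR
        have heq : (A \ ∅).filter (fun z => y0 ⊂ z ∨ z ⊂ y0)
            = ExtF (G.unitSphere v) y0 := by
          ext z
          simp only [Finset.sdiff_empty, Finset.mem_filter, hA, mem_ExtF]
          constructor
          · rintro ⟨⟨hxz, hzsimp⟩, hyz | hzy⟩
            · refine ⟨hyz, ?_⟩
              have hzne : (z \ y0).Nonempty := by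
                rw [Finset.sdiff_nonempty]
                exact fun h => hyz.2 h
              have hvz : v ∈ z \ x :=
                Finset.mem_sdiff.mpr ⟨hyz.subset (Finset.mem_insert_self v x), hvx⟩
              have hmm : ∀ a ∈ z \ y0, a ∈ z \ x ∧ a ≠ v := by
                intro a ha
                rw [Finset.mem_sdiff, hy0, Finset.mem_insert] at ha
                push_neg at ha
                exact ⟨Finset.mem_sdiff.mpr ⟨ha.1, ha.2.2⟩, ha.2.1⟩
              refine ⟨hzne, ?_, ?_⟩
              · refine (Finset.coe_subset.mpr ?_).trans
                  (le_refl ((G.unitSphere v).verts : Set V))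
                intro a ha
                obtain ⟨hax, hav⟩ := hmm a ha
                rw [sphere_verts_mem]
                exact ⟨simplex_mem_verts hzsimp hax,
                  hzsimp.2.2 v hvz a hax (fun h => hav h.symm)⟩
              · intro a ha b hb hab
                obtain ⟨hax, hav⟩ := hmm a ha
                obtain ⟨hbx, hbv⟩ := hmm b hb
                exact ⟨hzsimp.2.2 a hax b hbx hab,
                  hzsimp.2.2 v hvz a hax (fun h => hav h.symm),
                  hzsimp.2.2 v hvz b hbx (fun h => hbv h.symm)⟩
            · exfalso
              have h1c := Finset.card_lt_card hxz
              have h2c := Finset.card_lt_card hzy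
              have : y0.card = x.card + 1 := by
                rw [hy0, Finset.card_insert_of_notMem hvx]
              omega
          · rintro ⟨hy0z, hzsimp⟩
            have hxz : x ⊂ z := (hy0 ▸ Finset.ssubset_insert hvx).trans hy0z
            have hsphsub : ∀ a ∈ z \ y0, a ∈ G.verts ∧ G.Adj v a := by
              intro a ha
              have : a ∈ (G.unitSphere v).verts := hzsimp.2.1 ha
              rw [sphere_verts_mem] at this
              exact this
            have hzxeq : z \ x = insert v (z \ y0) := by
              ext u
              rw [Finset.mem_sdiff, Finset.mem_insert, Finset.mem_sdiff]
              constructor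
              · rintro ⟨huz, hux⟩
                by_cases huv : u = v
                · exact Or.inl huv
                · refine Or.inr ⟨huz, ?_⟩
                  rw [hy0, Finset.mem_insert]
                  push_neg
                  exact ⟨huv, hux⟩
              · rintro (h | ⟨huz, huy0⟩)
                · rw [h]
                  exact ⟨hy0z.subset (Finset.mem_insert_self v x), hvx⟩
                · refine ⟨huz, fun hux => huy0 ?_⟩
                  rw [hy0, Finset.mem_insert]
                  exact Or.inr hux
            refine ⟨⟨hxz, ?_⟩, Or.inl hy0z⟩
            rw [hzxeq]
            refine ⟨⟨v, Finset.mem_insert_self _ _⟩, ?_, ?_⟩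
            · intro a ha
              rw [Finset.mem_insert] at ha
              rcases ha with rfl | ha
              · exact hv
              · exact (hsphsub a ha).1
            · intro a ha b hb hab
              rw [Finset.mem_insert] at ha hb
              rcases ha with rfl | ha
              · rcases hb with rfl | hb
                · exact absurd rfl hab
                · exact (hsphsub b hb).2
              · rcases hb with rfl | hb
                · exact G.symm (hsphsub a ha).2
                · exact (hzsimp.2.2 a ha b hb hab).1
        rw [heq]
        refine ih1 y0 ?_
        intro a ha hmem
        rw [sphere_verts_mem] at hmem
        rw [hy0, Finset.mem_insert] at ha
        rcases ha with rfl | ha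
        · exact G.loopless a hmem.2
        · exact hdisj a ha hmem.1
      · -- dominated by y.erase v
        have hz0y : y.erase v ⊂ y := Finset.erase_ssubset hvy
        have hxz0 : x ⊂ y.erase v := by
          refine ssub (Finset.subset_erase.mpr ⟨hxy.subset, hvx⟩) ?_
          intro h
          apply hyy0
          rw [hy0, h]
          exact (Finset.insert_erase hvy).symm
        have hz0A : y.erase v ∈ A := by
          rw [hA, mem_ExtF]
          refine ⟨hxz0, ?_⟩
          refine simplex_subset hsimp
            (Finset.sdiff_subset_sdiff (Finset.erase_subset _ _) le_rfl) ?_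
          rw [Finset.sdiff_nonempty]
          exact fun h => hxz0.2 h
        have hz0R : y.erase v ∉ R := by
          intro h
          have := hRsub h
          simp only [Finset.mem_filter] at this
          exact (Finset.notMem_erase v y) this.2
        refine cmp_dominated _ (y.erase v) ?_ ?_
        · simp only [Finset.mem_filter, Finset.mem_sdiff]
          exact ⟨⟨hz0A, hz0R⟩, Or.inr hz0y⟩
        · intro w hw hwne
          simp only [Finset.mem_filter, Finset.mem_sdiff] at hw
          obtain ⟨⟨hwA, hwR⟩, hcomp⟩ := hw
          rcases hcomp with hyw | hwy
          · exact Or.inl (hz0y.trans hyw)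
          · right
            have hvw : v ∉ w := by
              intro hvw
              apply hwR
              apply hRlow
              · simp only [Finset.mem_filter]
                exact ⟨hwA, hvw⟩
              · exact Finset.card_lt_card hwy
            exact ssub (Finset.subset_erase.mpr ⟨hwy.subset, hvw⟩) hwne
    · -- remaining: ExtF (G.erase v) x
      have heq : A \ (A.filter (fun y => v ∈ y)) = ExtF (G.erase v) x := by
        ext y
        simp only [Finset.mem_sdiff, Finset.mem_filter, not_and, hA, mem_ExtF]
        constructor
        · rintro ⟨⟨hxy, hsimp⟩, hvy⟩
          have hvy' : v ∉ y := fun h => hvy ⟨hxy, hsimp⟩ h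
          refine ⟨hxy, hsimp.1, ?_, ?_⟩
          · intro a ha
            rw [Finset.mem_sdiff] at ha
            rw [erase_verts_mem]
            refine ⟨simplex_mem_verts hsimp (Finset.mem_sdiff.mpr ha), ?_⟩
            rintro rfl
            exact hvy' ha.1
          · intro a ha b hb hab
            refine ⟨hsimp.2.2 a ha b hb hab, ?_, ?_⟩
            · rintro rfl
              exact hvy' (Finset.mem_sdiff.mp ha).1
            · rintro rfl
              exact hvy' (Finset.mem_sdiff.mp hb).1
        · rintro ⟨hxy, hne, hsub, hadj⟩
          have hmemv : ∀ a ∈ y \ x, a ∈ G.verts ∧ a ≠ v := by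
            intro a ha
            have : a ∈ (G.erase v).verts := hsub ha
            rw [erase_verts_mem] at this
            exact this
          have hvy' : v ∉ y := by
            intro h
            exact (hmemv v (Finset.mem_sdiff.mpr ⟨h, hvx⟩)).2 rfl
          refine ⟨⟨hxy, hne, ?_, ?_⟩, fun _ h => hvy' h⟩
          · intro a ha
            exact (hmemv a ha).1
          · intro a ha b hb hab
            exact (hadj a ha b hb hab).1
      rw [heq]
      refine ih2 x ?_
      intro a ha hmem
      rw [erase_verts_mem] at hmem
      exact hdisj a ha hmem.1

end FGraph
namespace FGraph

variable {V : Type}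

/-- The subgraph induced on the common neighbours of all vertices of `x`. -/
noncomputable def nbrG (G : FGraph V) (x : Finset V) : FGraph V :=
  G.induce (fun w => ∀ a ∈ x, G.Adj a w)

theorem nbr_verts_mem {G : FGraph V} {x : Finset V} {w : V} :
    w ∈ (nbrG G x).verts ↔ w ∈ G.verts ∧ ∀ a ∈ x, G.Adj a w := by
  simp only [nbrG, induce, Finset.mem_filter]

theorem nbr_notMem_x {G : FGraph V} {x : Finset V} {w : V}
    (hw : w ∈ (nbrG G x).verts) : w ∉ x := by
  intro hwx
  exact G.loopless w ((nbr_verts_mem.mp hw).2 w hwx)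

theorem nbr_sphere {G : FGraph V} {d : ℤ} (hG : IsManifold d G) :
    ∀ (n : ℕ) (x : Finset V), x.card ≤ n → G.IsSimplex x →
    IsSphere (d - x.card) (nbrG G x) := by
  intro n
  induction n with
  | zero =>
    intro x hn hx
    have := Finset.card_pos.mpr hx.1
    omega
  | succ n IH =>
    intro x hn hx
    by_cases h1 : x.card = 1
    · obtain ⟨b, rfl⟩ := Finset.card_eq_one.mp h1
      have hbv : b ∈ G.verts := simplex_mem_verts hx (Finset.mem_singleton_self b)
      have heq : nbrG G {b} = G.unitSphere b := by
        apply ext'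
        · ext w
          rw [nbr_verts_mem, sphere_verts_mem]
          constructor
          · rintro ⟨hw, hp⟩
            exact ⟨hw, hp b (Finset.mem_singleton_self b)⟩
          · rintro ⟨hw, ha⟩
            refine ⟨hw, fun a haa => ?_⟩
            rw [Finset.mem_singleton] at haa
            subst haa
            exact ha
        · intro u w
          simp only [nbrG, unitSphere, induce]
          constructor
          · rintro ⟨huw, hpu, hpw⟩
            exact ⟨huw, hpu b (Finset.mem_singleton_self b),
              hpw b (Finset.mem_singleton_self b)⟩
          · rintro ⟨huw, hbu, hbw⟩
            refine ⟨huw, fun a haa => ?_, fun a haa => ?_⟩ <;>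
              (rw [Finset.mem_singleton] at haa; subst haa)
            · exact hbu
            · exact hbw
      rw [heq]
      have hdim : d - (({b} : Finset V).card : ℤ) = d - 1 := by
        rw [Finset.card_singleton]
        push_cast
        ring
      rw [hdim]
      exact manifold_spheres hG b hbv
    · have hx2 : 2 ≤ x.card := by
        have := Finset.card_pos.mpr hx.1
        omega
      obtain ⟨b, hb⟩ := hx.1
      set x' := x.erase b with hx'
      have hx'card : x'.card = x.card - 1 := Finset.card_erase_of_mem hb
      have hx'ne : x'.Nonempty := by
        rw [← Finset.card_pos, hx'card]
        omega
      have hx'simp : G.IsSimplex x' :=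
        simplex_subset hx (Finset.erase_subset _ _) hx'ne
      have hbx' : b ∉ x' := Finset.notMem_erase _ _
      have hbmem : b ∈ (nbrG G x').verts := by
        rw [nbr_verts_mem]
        refine ⟨simplex_mem_verts hx hb, fun a ha => ?_⟩
        exact hx.2.2 a (Finset.mem_of_mem_erase ha) b hb
          (Finset.mem_erase.mp ha).1
      have heq : nbrG G x = (nbrG G x').unitSphere b := by
        have hxins : ∀ a ∈ x, a = b ∨ a ∈ x' := by
          intro a ha
          by_cases hab : a = b
          · exact Or.inl hab
          · exact Or.inr (Finset.mem_erase.mpr ⟨hab, ha⟩)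
        apply ext'
        · ext w
          rw [sphere_verts_mem, nbr_verts_mem, nbr_verts_mem]
          constructor
          · rintro ⟨hw, hp⟩
            refine ⟨⟨hw, fun a ha => hp a (Finset.mem_of_mem_erase ha)⟩, ?_⟩
            simp only [nbrG, induce]
            exact ⟨hp b hb, fun a ha => hx.2.2 a (Finset.mem_of_mem_erase ha) b hb
              (Finset.mem_erase.mp ha).1, fun a ha => hp a (Finset.mem_of_mem_erase ha)⟩
          · rintro ⟨⟨hw, hp'⟩, hadj⟩
            simp only [nbrG, induce] at hadj
            refine ⟨hw, fun a ha => ?_⟩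
            rcases hxins a ha with rfl | ha'
            · exact hadj.1
            · exact hp' a ha'
        · intro u w
          simp only [nbrG, unitSphere, induce]
          constructor
          · rintro ⟨huw, hpu, hpw⟩
            have hpu' : ∀ a ∈ x', G.Adj a u := fun a ha => hpu a (Finset.mem_of_mem_erase ha)
            have hpw' : ∀ a ∈ x', G.Adj a w := fun a ha => hpw a (Finset.mem_of_mem_erase ha)
            have hpb : ∀ a ∈ x', G.Adj a b := fun a ha =>
              hx.2.2 a (Finset.mem_of_mem_erase ha) b hb (Finset.mem_erase.mp ha).1
            exact ⟨⟨huw, hpu', hpw'⟩, ⟨hpu b hb, hpb, hpu'⟩, ⟨hpw b hb, hpb, hpw'⟩⟩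
          · rintro ⟨⟨huw, hpu', hpw'⟩, ⟨hbu, _, _⟩, ⟨hbw, _, _⟩⟩
            refine ⟨huw, fun a ha => ?_, fun a ha => ?_⟩
            · rcases hxins a ha with rfl | ha'
              · exact hbu
              · exact hpu' a ha'
            · rcases hxins a ha with rfl | ha'
              · exact hbw
              · exact hpw' a ha'
      have hS : IsSphere (d - x'.card) (nbrG G x') := IH x' (by omega) hx'simp
      have hd0 : 0 ≤ d - x'.card := sphere_dim_nonneg hS hbmem
      have hSm := manifold_spheres (manifold_of_sphere hS hd0) b hbmem
      rw [heq]
      have hdim : d - (x.card : ℤ) = d - x'.card - 1 := by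
        have : (x'.card : ℤ) = (x.card : ℤ) - 1 := by
          rw [hx'card]
          push_cast [Nat.cast_sub (by omega : 1 ≤ x.card)]
          ring
        omega
      rw [hdim]
      exact hSm

/-- The family of simplices of `G` properly containing `x`. -/
noncomputable def SupF (G : FGraph V) (x : Finset V) : Finset (Finset V) :=
  G.verts.powerset.filter (fun y => G.IsSimplex y ∧ x ⊂ y)

@[simp] theorem mem_SupF {G : FGraph V} {x y : Finset V} :
    y ∈ SupF G x ↔ G.IsSimplex y ∧ x ⊂ y := by
  simp only [SupF, Finset.mem_filter, Finset.mem_powerset, and_iff_right_iff_imp]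
  exact fun h => fun a ha => simplex_mem_verts h.1 ha

theorem sup_sphere : ∀ (n : ℕ) {G : FGraph V} {d : ℤ}, IsManifold d G →
    ∀ x : Finset V, G.verts.card - x.card ≤ n → G.IsSimplex x →
    IsSphere (d - x.card) (Cmp (SupF G x)) := by
  intro n
  induction n with
  | zero =>
    intro G d hG x hn hx
    -- SupF must be empty
    have hempty : SupF G x = ∅ := by
      rw [Finset.eq_empty_iff_forall_notMem]
      intro y hy
      rw [mem_SupF] at hy
      have h1 := Finset.card_lt_card hy.2
      have h2 : y.card ≤ G.verts.card :=
        Finset.card_le_card (fun a ha => simplex_mem_verts hy.1 ha)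
      have h3 : x.card ≤ G.verts.card :=
        Finset.card_le_card (fun a ha => simplex_mem_verts hx ha)
      omega
    have hNb := nbr_sphere hG x.card x le_rfl hx
    have hnbe : (nbrG G x).verts = ∅ := by
      rw [Finset.eq_empty_iff_forall_notMem]
      intro w hw
      rw [nbr_verts_mem] at hw
      have hwx : w ∉ x := nbr_notMem_x (nbr_verts_mem.mpr hw)
      have : insert w x ∈ SupF G x := by
        rw [mem_SupF]
        refine ⟨⟨⟨w, Finset.mem_insert_self _ _⟩, ?_, ?_⟩, Finset.ssubset_insert hwx⟩
        · intro a ha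
          rw [Finset.mem_insert] at ha
          rcases ha with rfl | ha
          · exact hw.1
          · exact simplex_mem_verts hx ha
        · intro a ha b hb hab
          rw [Finset.mem_insert] at ha hb
          rcases ha with rfl | ha
          · rcases hb with rfl | hb
            · exact absurd rfl hab
            · exact G.symm (hw.2 b hb)
          · rcases hb with rfl | hb
            · exact hw.2 a ha
            · exact hx.2.2 a ha b hb hab
      rw [hempty] at this
      exact Finset.notMem_empty _ this
    have hdim := sphere_empty_dim hNb hnbe
    rw [hdim, hempty]
    exact IsSphere.empty _ rfl
  | succ n IH =>
    intro G d hG x hn hx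
    have hNb := nbr_sphere hG x.card x le_rfl hx
    by_cases hempty : SupF G x = ∅
    · have hnbe : (nbrG G x).verts = ∅ := by
        rw [Finset.eq_empty_iff_forall_notMem]
        intro w hw
        rw [nbr_verts_mem] at hw
        have hwx : w ∉ x := nbr_notMem_x (nbr_verts_mem.mpr hw)
        have : insert w x ∈ SupF G x := by
          rw [mem_SupF]
          refine ⟨⟨⟨w, Finset.mem_insert_self _ _⟩, ?_, ?_⟩, Finset.ssubset_insert hwx⟩
          · intro a ha
            rw [Finset.mem_insert] at ha
            rcases ha with rfl | ha
            · exact hw.1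
            · exact simplex_mem_verts hx ha
          · intro a ha b hb hab
            rw [Finset.mem_insert] at ha hb
            rcases ha with rfl | ha
            · rcases hb with rfl | hb
              · exact absurd rfl hab
              · exact G.symm (hw.2 b hb)
            · rcases hb with rfl | hb
              · exact hw.2 a ha
              · exact hx.2.2 a ha b hb hab
        rw [hempty] at this
        exact Finset.notMem_empty _ this
      have hdim := sphere_empty_dim hNb hnbe
      rw [hdim, hempty]
      exact IsSphere.empty _ rfl
    · -- nonempty case
      generalize he : d - (x.card : ℤ) = e at hNb
      cases hNb with
      | empty _ hne =>
        exfalso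
        apply hempty
        rw [Finset.eq_empty_iff_forall_notMem]
        intro y hy
        rw [mem_SupF] at hy
        obtain ⟨w, hw⟩ := Finset.exists_of_ssubset hy.2
        have : w ∈ (nbrG G x).verts := by
          rw [nbr_verts_mem]
          refine ⟨simplex_mem_verts hy.1 hw.1, fun a ha => ?_⟩
          exact hy.1.2.2 a (hy.2.subset ha) w hw.1 (fun h => hw.2 (h ▸ ha))
        rw [hne] at this
        exact Finset.notMem_empty _ this
      | punctured e _ hmN w0 hw0 hcw =>
        subst he
        have hd0 : 0 ≤ d - (x.card : ℤ) := manifold_nonneg hmN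
        have hw0x : w0 ∉ x := nbr_notMem_x hw0
        rw [nbr_verts_mem] at hw0
        have hy0 : insert w0 x ∈ SupF G x := by
          rw [mem_SupF]
          refine ⟨⟨⟨w0, Finset.mem_insert_self _ _⟩, ?_, ?_⟩, Finset.ssubset_insert hw0x⟩
          · intro a ha
            rw [Finset.mem_insert] at ha
            rcases ha with rfl | ha
            · exact hw0.1
            · exact simplex_mem_verts hx ha
          · intro a ha b hb hab
            rw [Finset.mem_insert] at ha hb
            rcases ha with rfl | ha
            · rcases hb with rfl | hb
              · exact absurd rfl hab
              · exact G.symm (hw0.2 b hb)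
            · rcases hb with rfl | hb
              · exact hw0.2 a ha
              · exact hx.2.2 a ha b hb hab
        refine IsSphere.punctured _ _ ?_ (insert w0 x) (by simpa using hy0) ?_
        · refine IsManifold.intro _ hd0 _ ?_
          intro y hy
          simp only [cmp_verts] at hy
          rw [cmp_unitSphere _ hy]
          rw [mem_SupF] at hy
          obtain ⟨hysimp, hxy⟩ := hy
          have heq : (SupF G x).filter (fun z => y ⊂ z ∨ z ⊂ y)
              = IvF x y ∪ SupF G y := by
            ext z
            simp only [Finset.mem_filter, Finset.mem_union, mem_IvF, mem_SupF]
            constructor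
            · rintro ⟨⟨hzsimp, hxz⟩, hyz | hzy⟩
              · exact Or.inr ⟨hzsimp, hyz⟩
              · exact Or.inl ⟨hxz, hzy⟩
            · rintro (⟨hxz, hzy⟩ | ⟨hzsimp, hyz⟩)
              · refine ⟨⟨?_, hxz⟩, Or.inr hzy⟩
                refine simplex_subset hysimp hzy.subset ?_
                obtain ⟨a, ha⟩ := hx.1
                exact ⟨a, hxz.subset ha⟩
              · exact ⟨⟨hzsimp, hxy.trans hyz⟩, Or.inl hyz⟩
          rw [heq]
          have harith : d - (x.card : ℤ) - 1 =
              ((y.card : ℤ) - x.card - 2) + (d - y.card) + 1 := by ring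
          rw [harith]
          refine join_sphere' ?_ (iv_sphere' hxy) ?_
          · intro b hb c hc
            rw [mem_IvF] at hb
            rw [mem_SupF] at hc
            exact hb.2.trans hc.2
          · refine IH hG y ?_ hysimp
            have h1 := Finset.card_lt_card hxy
            have h2 : y.card ≤ G.verts.card :=
              Finset.card_le_card (fun a ha => simplex_mem_verts hysimp ha)
            omega
        · rw [cmp_erase]
          set y0 := insert w0 x with hy0def
          set A := (SupF G x).erase y0 with hA
          refine collapse A (A.filter (fun y => w0 ∈ y)) (Finset.filter_subset _ _)
            Finset.card ?_ ?_
          · intro y hy R hRsub hynR hRlow hRhigh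
            simp only [Finset.mem_filter, hA, Finset.mem_erase, mem_SupF] at hy
            obtain ⟨⟨hyy0, hysimp, hxy⟩, hw0y⟩ := hy
            have hyA : y ∈ A := by
              rw [hA, Finset.mem_erase, mem_SupF]; exact ⟨hyy0, hysimp, hxy⟩
            have hyAR : y ∈ A \ R := Finset.mem_sdiff.mpr ⟨hyA, hynR⟩
            rw [cmp_unitSphere _ (by simpa using hyAR)]
            have hz0y : y.erase w0 ⊂ y := Finset.erase_ssubset hw0y
            have hxz0 : x ⊂ y.erase w0 := by
              refine ssub (Finset.subset_erase.mpr ⟨hxy.subset, hw0x⟩) ?_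
              intro h
              apply hyy0
              rw [hy0def, h]
              exact (Finset.insert_erase hw0y).symm
            have hz0A : y.erase w0 ∈ A := by
              rw [hA, Finset.mem_erase, mem_SupF]
              refine ⟨?_, ?_, hxz0⟩
              · intro h
                have : w0 ∈ y.erase w0 := by
                  rw [h, hy0def]; exact Finset.mem_insert_self _ _
                exact (Finset.notMem_erase w0 y) this
              · refine simplex_subset hysimp (Finset.erase_subset _ _) ?_
                obtain ⟨a, ha⟩ := hx.1
                exact ⟨a, hxz0.subset ha⟩
            have hz0R : y.erase w0 ∉ R := by
              intro h
              have := hRsub h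
              simp only [Finset.mem_filter] at this
              exact (Finset.notMem_erase w0 y) this.2
            refine cmp_dominated _ (y.erase w0) ?_ ?_
            · simp only [Finset.mem_filter, Finset.mem_sdiff]
              exact ⟨⟨hz0A, hz0R⟩, Or.inr hz0y⟩
            · intro w hw hwne
              simp only [Finset.mem_filter, Finset.mem_sdiff] at hw
              obtain ⟨⟨hwA, hwR⟩, hcomp⟩ := hw
              rcases hcomp with hyw | hwy
              · exact Or.inl (hz0y.trans hyw)
              · right
                have hvw : w0 ∉ w := by
                  intro hvw
                  apply hwR
                  apply hRlow
                  · simp only [Finset.mem_filter]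
                    exact ⟨hwA, hvw⟩
                  · exact Finset.card_lt_card hwy
                exact ssub (Finset.subset_erase.mpr ⟨hwy.subset, hvw⟩) hwne
          · -- remaining: ExtF ((nbrG G x).erase w0) x
            have heq : A \ (A.filter (fun y => w0 ∈ y))
                = ExtF ((nbrG G x).erase w0) x := by
              ext y
              simp only [Finset.mem_sdiff, Finset.mem_filter, not_and, hA,
                Finset.mem_erase, mem_SupF, mem_ExtF]
              constructor
              · rintro ⟨⟨hyy0, hysimp, hxy⟩, hw0y⟩
                have hw0y' : w0 ∉ y := fun h => hw0y ⟨hyy0, hysimp, hxy⟩ h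
                refine ⟨hxy, ?_, ?_, ?_⟩
                · rw [Finset.sdiff_nonempty]
                  exact fun h => hxy.2 h
                · intro a ha
                  rw [Finset.mem_sdiff] at ha
                  rw [erase_verts_mem, nbr_verts_mem]
                  refine ⟨⟨simplex_mem_verts hysimp ha.1, fun b hb => ?_⟩, ?_⟩
                  · exact hysimp.2.2 b (hxy.subset hb) a ha.1 (fun h => ha.2 (h ▸ hb))
                  · rintro rfl
                    exact hw0y' ha.1
                · intro a ha b hb hab
                  rw [Finset.mem_sdiff] at ha hb
                  refine ⟨⟨hysimp.2.2 a ha.1 b hb.1 hab, ?_, ?_⟩, ?_, ?_⟩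
                  · show ∀ c ∈ x, G.Adj c a
                    exact fun c hc => hysimp.2.2 c (hxy.subset hc) a ha.1
                      (fun h => ha.2 (h ▸ hc))
                  · show ∀ c ∈ x, G.Adj c b
                    exact fun c hc => hysimp.2.2 c (hxy.subset hc) b hb.1
                      (fun h => hb.2 (h ▸ hc))
                  · rintro rfl; exact hw0y' ha.1
                  · rintro rfl; exact hw0y' hb.1
              · rintro ⟨hxy, hne, hsub, hadj⟩
                have hmemv : ∀ a ∈ y \ x, (a ∈ G.verts ∧ ∀ b ∈ x, G.Adj b a) ∧ a ≠ w0 := by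
                  intro a ha
                  have : a ∈ ((nbrG G x).erase w0).verts := hsub ha
                  rw [erase_verts_mem, nbr_verts_mem] at this
                  exact this
                have hw0y' : w0 ∉ y := by
                  intro h
                  exact (hmemv w0 (Finset.mem_sdiff.mpr ⟨h, hw0x⟩)).2 rfl
                have hysimp : G.IsSimplex y := by
                  refine ⟨?_, ?_, ?_⟩
                  · obtain ⟨a, ha⟩ := hx.1
                    exact ⟨a, hxy.subset ha⟩
                  · intro a ha
                    by_cases hax : a ∈ x
                    · exact simplex_mem_verts hx hax
                    · exact ((hmemv a (Finset.mem_sdiff.mpr ⟨ha, hax⟩)).1).1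
                  · intro a ha b hb hab
                    by_cases hax : a ∈ x
                    · by_cases hbx : b ∈ x
                      · exact hx.2.2 a hax b hbx hab
                      · exact ((hmemv b (Finset.mem_sdiff.mpr ⟨hb, hbx⟩)).1).2 a hax
                    · by_cases hbx : b ∈ x
                      · exact G.symm (((hmemv a (Finset.mem_sdiff.mpr ⟨ha, hax⟩)).1).2 b hbx)
                      · exact (hadj a (Finset.mem_sdiff.mpr ⟨ha, hax⟩)
                          b (Finset.mem_sdiff.mpr ⟨hb, hbx⟩) hab).1.1
                have hyy0 : y ≠ y0 := by
                  intro h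
                  apply hw0y'
                  rw [h, hy0def]
                  exact Finset.mem_insert_self _ _
                exact ⟨⟨hyy0, hysimp, hxy⟩, fun _ h => hw0y' h⟩
            rw [heq]
            refine ext_contr hcw x ?_
            intro a ha hmem
            rw [erase_verts_mem, nbr_verts_mem] at hmem
            exact G.loopless a (hmem.1.2 a ha)

theorem sup_sphere' {G : FGraph V} {d : ℤ} (hG : IsManifold d G) {x : Finset V}
    (hx : G.IsSimplex x) : IsSphere (d - x.card) (Cmp (SupF G x)) :=
  sup_sphere _ hG x le_rfl hx

end FGraph
/-- Discrete Morse–Sard for one function. If `G` is a `d`-manifold with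
`d ≥ 1`, `f : V → ℝ` is any function and `c ∉ f(V)`, then the level set `{f = c}` is
either the empty graph or a `(d-1)`-manifold. -/
theorem morse_sard_one_function {V : Type} (G : FGraph V) (d : ℤ) (hd : 1 ≤ d)
    (hG : FGraph.IsManifold d G) (f : V → ℝ) (c : ℝ) (hc : ∀ v ∈ G.verts, f v ≠ c) :
    (G.levelSet f c).verts = ∅ ∨ FGraph.IsManifold (d - 1) (G.levelSet f c) := by
  right
  set L := G.levelSet f c with hL
  have hv : ∀ y : Finset V, y ∈ L.verts ↔ (G.IsSimplex y ∧
      ((∃ a ∈ y, f a - c < 0) ∧ (∃ b ∈ y, 0 < f b - c))) := by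
    intro y
    simp only [hL, FGraph.levelSet, FGraph.induce, FGraph.barycentric,
      Finset.mem_filter, Finset.mem_powerset]
    constructor
    · rintro ⟨⟨_, hs⟩, hsign⟩
      exact ⟨hs, hsign⟩
    · rintro ⟨hs, hsign⟩
      exact ⟨⟨fun a ha => FGraph.simplex_mem_verts hs ha, hs⟩, hsign⟩
  have hadjL : ∀ y z : Finset V, L.Adj y z ↔ (G.IsSimplex y ∧ G.IsSimplex z ∧
      (y ⊂ z ∨ z ⊂ y) ∧
      ((∃ a ∈ y, f a - c < 0) ∧ (∃ b ∈ y, 0 < f b - c)) ∧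
      ((∃ a ∈ z, f a - c < 0) ∧ (∃ b ∈ z, 0 < f b - c))) := by
    intro y z
    simp only [hL, FGraph.levelSet, FGraph.induce, FGraph.barycentric]
    tauto
  refine FGraph.IsManifold.intro _ (by omega) _ ?_
  intro x hx
  rw [hv] at hx
  obtain ⟨hxsimp, hxneg, hxpos⟩ := hx
  set N := x.filter (fun a => f a - c < 0) with hN
  set P' := x.filter (fun a => 0 < f a - c) with hP'
  have hNP : N ∪ P' = x := by
    ext a
    rw [Finset.mem_union, hN, hP', Finset.mem_filter, Finset.mem_filter]
    constructor
    · rintro (⟨h, _⟩ | ⟨h, _⟩) <;> exact h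
    · intro ha
      have hne : f a ≠ c := hc a (FGraph.simplex_mem_verts hxsimp ha)
      rcases lt_trichotomy (f a) c with h | h | h
      · exact Or.inl ⟨ha, by linarith⟩
      · exact absurd h hne
      · exact Or.inr ⟨ha, by linarith⟩
  have hdisj : Disjoint N P' := by
    rw [Finset.disjoint_left]
    intro a haN haP
    rw [hN, Finset.mem_filter] at haN
    rw [hP', Finset.mem_filter] at haP
    linarith [haN.2, haP.2]
  have hNne : N.Nonempty := by
    obtain ⟨a, ha, hasign⟩ := hxneg
    exact ⟨a, by rw [hN, Finset.mem_filter]; exact ⟨ha, hasign⟩⟩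
  have hP'ne : P'.Nonempty := by
    obtain ⟨b, hb, hbsign⟩ := hxpos
    exact ⟨b, by rw [hP', Finset.mem_filter]; exact ⟨hb, hbsign⟩⟩
  have hmem : ∀ y : Finset V, (y ∈ L.verts ∧ L.Adj x y) ↔
      y ∈ FGraph.LvF N P' ∪ FGraph.SupF G x := by
    intro y
    rw [Finset.mem_union, FGraph.mem_LvF, FGraph.mem_SupF, hv, hadjL]
    constructor
    · rintro ⟨⟨hysimp, hyneg, hypos⟩, _, _, hcomp, _, _⟩
      rcases hcomp with hxy | hyx
      · exact Or.inr ⟨hysimp, hxy⟩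
      · left
        rw [hNP]
        refine ⟨hyx, ?_, ?_⟩
        · obtain ⟨a, ha, hasign⟩ := hyneg
          exact ⟨a, Finset.mem_inter.mpr ⟨ha, by
            rw [hN, Finset.mem_filter]; exact ⟨hyx.subset ha, hasign⟩⟩⟩
        · obtain ⟨b, hb, hbsign⟩ := hypos
          exact ⟨b, Finset.mem_inter.mpr ⟨hb, by
            rw [hP', Finset.mem_filter]; exact ⟨hyx.subset hb, hbsign⟩⟩⟩
    · rintro (⟨hyx, hyN, hyP⟩ | ⟨hysimp, hxy⟩)
      · rw [hNP] at hyx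
        have hysimp : G.IsSimplex y := by
          refine FGraph.simplex_subset hxsimp hyx.subset ?_
          obtain ⟨a, ha⟩ := hyN
          exact ⟨a, (Finset.mem_inter.mp ha).1⟩
        have hyneg : ∃ a ∈ y, f a - c < 0 := by
          obtain ⟨a, ha⟩ := hyN
          rw [Finset.mem_inter, hN, Finset.mem_filter] at ha
          exact ⟨a, ha.1, ha.2.2⟩
        have hypos : ∃ b ∈ y, 0 < f b - c := by
          obtain ⟨b, hb⟩ := hyP
          rw [Finset.mem_inter, hP', Finset.mem_filter] at hb
          exact ⟨b, hb.1, hb.2.2⟩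
        exact ⟨⟨hysimp, hyneg, hypos⟩, hxsimp, hysimp, Or.inr hyx,
          ⟨hxneg, hxpos⟩, hyneg, hypos⟩
      · have hyneg : ∃ a ∈ y, f a - c < 0 := by
          obtain ⟨a, ha, hasign⟩ := hxneg
          exact ⟨a, hxy.subset ha, hasign⟩
        have hypos : ∃ b ∈ y, 0 < f b - c := by
          obtain ⟨b, hb, hbsign⟩ := hxpos
          exact ⟨b, hxy.subset hb, hbsign⟩
        exact ⟨⟨hysimp, hyneg, hypos⟩, hxsimp, hysimp, Or.inl hxy,
          ⟨hxneg, hxpos⟩, hyneg, hypos⟩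
  have hclaim : L.unitSphere x = FGraph.Cmp (FGraph.LvF N P' ∪ FGraph.SupF G x) := by
    apply FGraph.ext'
    · ext y
      rw [FGraph.cmp_verts, ← hmem]
      simp only [FGraph.unitSphere, FGraph.induce, Finset.mem_filter]
    · intro y z
      rw [FGraph.cmp_adj, ← hmem, ← hmem]
      simp only [FGraph.unitSphere, FGraph.induce]
      constructor
      · rintro ⟨hyz, hxy, hxz⟩
        have hyv : y ∈ L.verts := L.mem_of_adj (L.symm hxy)
        have hzv : z ∈ L.verts := L.mem_of_adj (L.symm hxz)
        rw [hadjL] at hyz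
        exact ⟨hyz.2.2.1, ⟨hyv, hxy⟩, hzv, hxz⟩
      · rintro ⟨hcomp, ⟨hyv, hxy⟩, hzv, hxz⟩
        refine ⟨?_, hxy, hxz⟩
        rw [hadjL]
        rw [hv] at hyv hzv
        exact ⟨hyv.1, hzv.1, hcomp, hyv.2, hzv.2⟩
  rw [hclaim]
  have hxcard : N.card + P'.card = x.card := by
    rw [← Finset.card_union_of_disjoint hdisj, hNP]
  have harith : d - 1 - 1 =
      ((N.card : ℤ) + P'.card - 3) + (d - (x.card : ℤ)) + 1 := by
    have : (N.card : ℤ) + P'.card = x.card := by exact_mod_cast hxcard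
    omega
  rw [harith]
  refine FGraph.join_sphere' ?_ (FGraph.lv_sphere' hNne hP'ne hdisj)
    (FGraph.sup_sphere' hG hxsimp)
  intro b hb c' hc'
  rw [FGraph.mem_LvF] at hb
  rw [FGraph.mem_SupF] at hc'
  have : b ⊂ x := hNP ▸ hb.1
  exact this.trans hc'.2
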